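/- arXiv:1611.08339 — 6 statements merged into one kernel-verified Lean document; each statement's English description precedes it below -/
import Mathlib

section
/- For every Sperner-admissible labeling ℓ : V_{k,q} → {1,…,k} (with k ≥ 2, q ≥ 1), the number of lattice points b ∈ V_{k,q-1} for which the cell e(b) is non-monochromatic under ℓ is at least the binomial coefficient C(q+k-3, k-2). -/
/-!
A monochromatic cell `e(b)` of colour `c` has `b_c > 0`: some vertex `b + e_j` with `j ≠ c`
carries the label `c`, and admissibility gives `b_c = (b + e_j)_c > 0`. Hence `b ↦ b - e_c`
sends monochromatic cells of level `q - 1` into `V_{k,q-2}`, and it is injective because two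
monochromatic cells sharing a vertex have the same colour. So at least
`|V_{k,q-1}| - |V_{k,q-2}| = C(q+k-2, k-1) - C(q+k-3, k-1) = C(q+k-3, k-2)` cells are
non-monochromatic.
-/

open Finset

variable {ι : Type*} [DecidableEq ι]

def IsMonochromaticCell (ℓ : (ι → ℕ) → ι) (b : ι → ℕ) : Prop :=
  ∀ i j, ℓ (b + Pi.single i 1) = ℓ (b + Pi.single j 1)

lemma IsMonochromaticCell.label_eq_of_add_single_eq {ℓ : (ι → ℕ) → ι} {b b' : ι → ℕ}
    (hb : IsMonochromaticCell ℓ b) (hb' : IsMonochromaticCell ℓ b') {i j : ι}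
    (h : b + Pi.single i 1 = b' + Pi.single j 1) (i' j' : ι) :
    ℓ (b + Pi.single i' 1) = ℓ (b' + Pi.single j' 1) := by
  rw [hb i' i, h, hb' j j']

lemma tsub_single_add_single_of_le {b : ι → ℕ} {c : ι} {n : ℕ} (h : n ≤ b c) :
    b - Pi.single c n + Pi.single c n = b := by
  ext t
  rcases eq_or_ne t c with rfl | ht
  · simp [Nat.sub_add_cancel h]
  · simp [ht]

variable [Fintype ι]

def IsSpernerLabeling (ℓ : (ι → ℕ) → ι) (q : ℕ) : Prop :=
  ∀ a : ι → ℕ, ∑ i, a i = q → 0 < a (ℓ a)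

instance (ℓ : (ι → ℕ) → ι) : DecidablePred (IsMonochromaticCell ℓ) :=
  fun _ => inferInstanceAs (Decidable (∀ _ _, _))

theorem card_piAntidiag_univ (n : ℕ) :
    #(piAntidiag (univ : Finset ι) n) = (Fintype.card ι + n - 1).choose n := by
  rw [← map_sym_eq_piAntidiag, card_map, sym_univ, card_univ, Sym.card_sym_eq_choose]

lemma sum_add_single {M : Type*} [AddCommMonoid M] (b : ι → M) (j : ι) (x : M) :
    ∑ i, (b + Pi.single j x : ι → M) i = ∑ i, b i + x := by
  simp [sum_add_distrib]

variable {ℓ : (ι → ℕ) → ι}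

lemma IsSpernerLabeling.pos_of_isMonochromaticCell [Nontrivial ι] {n : ℕ}
    (hℓ : IsSpernerLabeling ℓ (n + 1)) {b : ι → ℕ} (hb : ∑ i, b i = n)
    (hmono : IsMonochromaticCell ℓ b) (i : ι) : 0 < b (ℓ (b + Pi.single i 1)) := by
  obtain ⟨j, hj⟩ := exists_ne (ℓ (b + Pi.single i 1))
  have := hℓ (b + Pi.single j 1) (by rw [sum_add_single, hb])
  rwa [hmono j i, Pi.add_apply, Pi.single_eq_of_ne hj.symm, add_zero] at this

theorem IsSpernerLabeling.card_filter_isMonochromaticCell_le [Nontrivial ι] {n : ℕ}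
    (hℓ : IsSpernerLabeling ℓ (n + 2)) :
    #((piAntidiag (univ : Finset ι) (n + 1)).filter (IsMonochromaticCell ℓ)) ≤
      #(piAntidiag (univ : Finset ι) n) := by
  obtain ⟨i₀⟩ : Nonempty ι := inferInstance
  set color : (ι → ℕ) → ι := fun b => ℓ (b + Pi.single i₀ 1)
  have hdecomp : ∀ b ∈ (piAntidiag univ (n + 1)).filter (IsMonochromaticCell ℓ),
      b - Pi.single (color b) 1 + Pi.single (color b) 1 = b := by
    intro b hb
    rw [mem_filter, mem_piAntidiag] at hb
    exact tsub_single_add_single_of_le (hℓ.pos_of_isMonochromaticCell hb.1.1 hb.2 i₀)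
  refine card_le_card_of_injOn (fun b => b - Pi.single (color b) 1) (fun b hb => ?_) ?_
  · have hsum := sum_add_single (b - Pi.single (color b) 1) (color b) 1
    rw [hdecomp b hb] at hsum
    rw [mem_coe, mem_filter, mem_piAntidiag] at hb
    have hb_sum : ∑ i, b i = n + 1 := hb.1.1
    rw [mem_coe, mem_piAntidiag]
    exact ⟨by change ∑ i, _ = n; omega, by simp⟩
  · intro b hb b' hb' h
    simp only at h
    have hvertex : b + Pi.single (color b') 1 = b' + Pi.single (color b) 1 :=
      calc b + Pi.single (color b') 1
          = b - Pi.single (color b) 1 + Pi.single (color b) 1 + Pi.single (color b') 1 := by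
            rw [hdecomp b hb]
        _ = b' - Pi.single (color b') 1 + Pi.single (color b') 1 + Pi.single (color b) 1 := by
            rw [h, add_right_comm]
        _ = b' + Pi.single (color b) 1 := by rw [hdecomp b' hb']
    have hcolor : color b = color b' :=
      (mem_filter.mp hb).2.label_eq_of_add_single_eq (mem_filter.mp hb').2 hvertex i₀ i₀
    rw [← hdecomp b hb, ← hdecomp b' hb', h, hcolor]

theorem IsSpernerLabeling.choose_le_card_filter_not_isMonochromaticCell [Nontrivial ι] {n : ℕ}
    (hℓ : IsSpernerLabeling ℓ (n + 1)) :
    (n + Fintype.card ι - 2).choose (Fintype.card ι - 2) ≤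
      #((piAntidiag (univ : Finset ι) n).filter fun b => ¬ IsMonochromaticCell ℓ b) := by
  obtain ⟨k, hk⟩ : ∃ k, Fintype.card ι = k + 2 :=
    ⟨_, (Nat.sub_add_cancel Fintype.one_lt_card).symm⟩
  rw [filter_not, card_sdiff_of_subset (filter_subset _ _), card_piAntidiag_univ, hk]
  cases n with
  | zero =>
    obtain ⟨i₀⟩ : Nonempty ι := inferInstance
    have hempty : (piAntidiag univ 0).filter (IsMonochromaticCell ℓ) = ∅ := by
      refine filter_eq_empty_iff.mpr fun b hb hmono => ?_
      rw [piAntidiag_zero, mem_singleton] at hb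
      subst hb
      simpa using hℓ.pos_of_isMonochromaticCell (by simp) hmono i₀
    rw [hempty]
    simp
  | succ m =>
    have hmono := IsSpernerLabeling.card_filter_isMonochromaticCell_le hℓ
    rw [card_piAntidiag_univ, hk] at hmono
    have hpascal : (k + 2 + (m + 1) - 1).choose (m + 1) =
        (k + 2 + m - 1).choose m + (m + 1 + (k + 2) - 2).choose (k + 2 - 2) := by
      rw [show k + 2 + (m + 1) - 1 = m + k + 1 + 1 by omega, Nat.choose_succ_succ',
        show k + 2 + m - 1 = m + k + 1 by omega, show m + 1 + (k + 2) - 2 = m + 1 + k by omega,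
        Nat.add_sub_cancel, ← Nat.choose_symm_add, Nat.add_right_comm]
    omega

/-- For every Sperner-admissible labeling `ℓ : V_{k,q} → {1,…,k}` (with
`k ≥ 2`, `q ≥ 1`), the number of lattice points `b ∈ V_{k,q-1}` whose cell
`e(b) = {b + e_1, …, b + e_k}` is non-monochromatic under `ℓ` is at least
`C(q+k-3, k-2)`. -/
theorem sperner_lattice_coloring_lower_bound (k q : ℕ) (hk : 2 ≤ k) (hq : 1 ≤ q)
    (ℓ : (Fin k → ℕ) → Fin k)
    (hℓ : ∀ a : Fin k → ℕ, (∑ i, a i) = q → 0 < a (ℓ a)) :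
    Nat.choose (q + k - 3) (k - 2) ≤
      ((Finset.Nat.antidiagonalTuple k (q - 1)).filter fun b =>
        ∃ i j : Fin k,
          ℓ (fun t => b t + if t = i then 1 else 0) ≠
            ℓ (fun t => b t + if t = j then 1 else 0)).card := by
  obtain ⟨n, rfl⟩ : ∃ n, q = n + 1 := ⟨q - 1, by omega⟩
  have : Nontrivial (Fin k) := Fin.nontrivial_iff_two_le.mpr hk
  have hcell : ∀ (b : Fin k → ℕ) (i : Fin k),
      (fun t => b t + if t = i then 1 else 0) = b + Pi.single i 1 := by
    intro b i
    ext t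
    simp [Pi.single_apply]
  have key := IsSpernerLabeling.choose_le_card_filter_not_isMonochromaticCell (n := n) hℓ
  rw [Fintype.card_fin, piAntidiag_univ_fin_eq_antidiagonalTuple] at key
  simp only [IsMonochromaticCell, not_forall] at key
  simp only [hcell, Nat.add_sub_cancel]
  convert key using 2
  omega
end

section
/- For k ≥ 2 and q ≥ 1, define the first-choice labeling ℓ* : V_{k,q} → {1,…,k} by ℓ*(a) = min{ i : a_i > 0 }. Then ℓ* is Sperner-admissible, a cell e(b) (b ∈ V_{k,q-1}) is non-monochromatic under ℓ* if and only if b_1 = 0, and the number of non-monochromatic cells under ℓ* is exactly C(q+k-3, k-2). -/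
/-- The first-choice labeling: `ℓ*(a) = min { i : a_i > 0 }` (with an arbitrary
default value when `a = 0`, which never occurs on `V_{k,q}` for `q ≥ 1`). -/
noncomputable def firstChoice (k : ℕ) (hk : 0 < k) (a : Fin k → ℕ) : Fin k :=
  if h : (Finset.univ.filter fun i => 0 < a i).Nonempty then
    (Finset.univ.filter fun i => 0 < a i).min' h
  else ⟨0, hk⟩

/-!
A vertex gets label `1` under `ℓ*` exactly when its first coordinate is positive. The vertices of
the cell `e(b)` have first coordinates `b₁ + [i = 1]`, so if `b₁ > 0` every vertex is labelled `1`,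
while if `b₁ = 0` the vertex `b + e₁` is labelled `1` and `b + e₂` is not. Hence the
non-monochromatic cells are the points of `V_{k-1,q-1}`, counted by stars and bars.
-/

open Finset

theorem Finset.Nat.card_antidiagonalTuple (k n : ℕ) :
    #(Nat.antidiagonalTuple k n) = (k + n - 1).choose n := by
  rw [← piAntidiag_univ_fin_eq_antidiagonalTuple, ← map_sym_eq_piAntidiag, card_map,
    sym_univ, card_univ, Sym.card_sym_eq_choose, Fintype.card_fin]

theorem Finset.Nat.card_filter_antidiagonalTuple_apply_zero_eq_zero (m n : ℕ) :
    #{b ∈ Nat.antidiagonalTuple (m + 1) n | b 0 = 0} = #(Nat.antidiagonalTuple m n) := by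
  refine card_nbij' Fin.tail (fun c => Fin.cons 0 c) ?_ ?_ ?_ ?_
  · intro b hb
    simp only [coe_filter, Nat.mem_antidiagonalTuple, Fin.sum_univ_succ] at hb
    simpa [hb.2, Nat.mem_antidiagonalTuple, Fin.tail] using hb.1
  · intro c hc
    simp_all [Nat.mem_antidiagonalTuple, Fin.sum_univ_succ]
  · intro b hb
    simp only [coe_filter] at hb
    rw [← hb.2]
    exact Fin.cons_self_tail b
  · intro c _
    exact Fin.tail_cons (α := fun _ => ℕ) 0 c

section firstChoice

variable {k : ℕ} (hk : 0 < k) {a : Fin k → ℕ}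

theorem pos_firstChoice (ha : a ≠ 0) : 0 < a (firstChoice k hk a) := by
  have hne : ({i | 0 < a i} : Finset (Fin k)).Nonempty := by
    obtain ⟨i, hi⟩ := Function.ne_iff.mp ha
    exact ⟨i, by simpa [Nat.pos_iff_ne_zero] using hi⟩
  rw [firstChoice, dif_pos hne]
  simpa using min'_mem _ hne

theorem firstChoice_eq_zero (h : 0 < a ⟨0, hk⟩) : firstChoice k hk a = ⟨0, hk⟩ := by
  have hmem : (⟨0, hk⟩ : Fin k) ∈ ({i | 0 < a i} : Finset (Fin k)) := by simpa using h
  rw [firstChoice, dif_pos ⟨_, hmem⟩]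
  exact le_antisymm (min'_le _ _ hmem) (Nat.zero_le _)

end firstChoice

theorem exists_firstChoice_ne_iff {k : ℕ} (hk : 1 < k) (b : Fin k → ℕ) :
    (∃ i j : Fin k,
        firstChoice k (by omega) (fun t => b t + if t = i then 1 else 0) ≠
          firstChoice k (by omega) (fun t => b t + if t = j then 1 else 0)) ↔
      b ⟨0, by omega⟩ = 0 := by
  have hk0 : 0 < k := by omega
  constructor
  · rintro ⟨i, j, hij⟩
    by_contra hb
    have hlabel (i : Fin k) :
        firstChoice k hk0 (fun t => b t + if t = i then 1 else 0) = ⟨0, hk0⟩ :=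
      firstChoice_eq_zero hk0 (by grind)
    exact hij ((hlabel i).trans (hlabel j).symm)
  · intro hb
    refine ⟨⟨0, hk0⟩, ⟨1, hk⟩, ?_⟩
    rw [firstChoice_eq_zero hk0 (by simp)]
    intro h
    have hpos := pos_firstChoice hk0 (a := fun t => b t + if t = ⟨1, hk⟩ then 1 else 0)
      (Function.ne_iff.mpr ⟨⟨1, hk⟩, by simp⟩)
    rw [← h] at hpos
    simp [hb, Fin.ext_iff] at hpos

/-- For `k ≥ 2`, `q ≥ 1`, the first-choice labeling `ℓ*` is
Sperner-admissible; a cell `e(b)` (`b ∈ V_{k,q-1}`) is non-monochromatic under `ℓ*`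
iff `b_1 = 0`; and the number of non-monochromatic cells is exactly `C(q+k-3, k-2)`. -/
theorem firstChoice_admissible_nonmono_iff_card (k q : ℕ) (hk : 2 ≤ k) (hq : 1 ≤ q) :
    (∀ a : Fin k → ℕ, (∑ i, a i) = q → 0 < a (firstChoice k (by omega) a)) ∧
    (∀ b : Fin k → ℕ, (∑ i, b i) = q - 1 →
      ((∃ i j : Fin k,
          firstChoice k (by omega) (fun t => b t + if t = i then 1 else 0) ≠
            firstChoice k (by omega) (fun t => b t + if t = j then 1 else 0)) ↔
        b ⟨0, by omega⟩ = 0)) ∧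
    ((Finset.Nat.antidiagonalTuple k (q - 1)).filter fun b =>
        ∃ i j : Fin k,
          firstChoice k (by omega) (fun t => b t + if t = i then 1 else 0) ≠
            firstChoice k (by omega) (fun t => b t + if t = j then 1 else 0)).card =
      Nat.choose (q + k - 3) (k - 2) := by
  refine ⟨fun a ha => pos_firstChoice _ ?_, fun b _ => exists_firstChoice_ne_iff hk b, ?_⟩
  · rintro rfl
    simp only [Pi.zero_apply, sum_const_zero] at ha
    omega
  rw [filter_congr fun b _ => exists_firstChoice_ne_iff hk b]
  obtain ⟨m, rfl⟩ : ∃ m, k = m + 2 := ⟨k - 2, by omega⟩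
  rw [Fin.mk_zero', Nat.card_filter_antidiagonalTuple_apply_zero_eq_zero,
    Nat.card_antidiagonalTuple, show q + (m + 2) - 3 = m + 1 + (q - 1) - 1 by omega, Nat.add_sub_cancel]
  exact Nat.choose_symm_of_eq_add (by omega)
end

section
/- For every Sperner-admissible labeling ℓ : V_{k,q} → {1,…,k} (with k ≥ 2, q ≥ 1), the number of lattice points b ∈ V_{k,q-1} for which the cell e(b) is monochromatic under ℓ is at most |V_{k,q-2}| = C(q+k-3, k-1). -/
/-! If the cell `e(b)` is monochromatic of colour `c`, pick `j ≠ c`: the vertex `b + e_j` has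
label `c`, so admissibility gives `b_c > 0`, i.e. `b = a + e_c` with `a ∈ V_{k,q-2}`. The point `a`
determines `b`: were `a + e_c` and `a + e_{c'}` both monochromatic, of colours `c` and `c'`, their
common vertex `a + e_c + e_{c'}` would carry both labels, so `c = c'`. Stars and bars counts
`V_{k,q-2}`. -/

open Finset

namespace SpernerLattice

variable {k n : ℕ}

def IsSpernerAdmissible (ℓ : (Fin k → ℕ) → Fin k) (q : ℕ) : Prop :=
  ∀ a : Fin k → ℕ, ∑ i, a i = q → 0 < a (ℓ a)

def IsMonochromaticCell (ℓ : (Fin k → ℕ) → Fin k) (b : Fin k → ℕ) (c : Fin k) : Prop :=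
  ∀ i, ℓ (b + Pi.single i 1) = c

variable {ℓ : (Fin k → ℕ) → Fin k} {a b b' : Fin k → ℕ} {c c' : Fin k}

lemma sum_add_single_one (b : Fin k → ℕ) (i : Fin k) :
    ∑ t, (b + Pi.single i 1 : Fin k → ℕ) t = ∑ t, b t + 1 := by
  simp [sum_add_distrib]

lemma IsMonochromaticCell.pos (hk : 2 ≤ k) (hℓ : IsSpernerAdmissible ℓ (n + 1))
    (hb : b ∈ Nat.antidiagonalTuple k n) (hbc : IsMonochromaticCell ℓ b c) : 0 < b c := by
  have : Nontrivial (Fin k) := Fin.nontrivial_iff_two_le.mpr hk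
  obtain ⟨j, hj⟩ := exists_ne c
  have := hℓ (b + Pi.single j 1) (by rw [sum_add_single_one, Nat.mem_antidiagonalTuple.mp hb])
  rwa [hbc j, Pi.add_apply, Pi.single_eq_of_ne hj.symm, add_zero] at this

lemma IsMonochromaticCell.eq_of_add_single (hb : IsMonochromaticCell ℓ b c)
    (hb' : IsMonochromaticCell ℓ b' c') (h : a + Pi.single c 1 = b)
    (h' : a + Pi.single c' 1 = b') : b = b' := by
  have hcc' : c = c' :=
    calc c = ℓ (b + Pi.single c' 1) := (hb c').symm
      _ = ℓ (b' + Pi.single c 1) := by rw [← h, ← h', add_right_comm]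
      _ = c' := hb' c
  rw [← h, ← h', hcc']

lemma IsMonochromaticCell.exists_add_single (hk : 2 ≤ k)
    (hℓ : IsSpernerAdmissible ℓ (n + 2)) (hb : b ∈ Nat.antidiagonalTuple k (n + 1))
    (hbc : IsMonochromaticCell ℓ b c) :
    ∃ a ∈ Nat.antidiagonalTuple k n, a + Pi.single c 1 = b := by
  have hpos := hbc.pos hk hℓ hb
  rw [Nat.mem_antidiagonalTuple] at hb
  have hab : b - Pi.single c 1 + Pi.single c 1 = b := by
    refine tsub_add_cancel_of_le fun t => ?_
    rcases eq_or_ne t c with rfl | htc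
    · simpa using Nat.one_le_of_lt hpos
    · simp [htc]
  refine ⟨b - Pi.single c 1, ?_, hab⟩
  have := sum_add_single_one (b - Pi.single c 1) c
  rw [hab, hb] at this
  rw [Nat.mem_antidiagonalTuple]
  omega

theorem card_le_of_forall_isMonochromaticCell (hk : 2 ≤ k) (hℓ : IsSpernerAdmissible ℓ (n + 2))
    (s : Finset (Fin k → ℕ))
    (hs : ∀ b ∈ s, b ∈ Nat.antidiagonalTuple k (n + 1) ∧ ∃ c, IsMonochromaticCell ℓ b c) :
    #s ≤ #(Nat.antidiagonalTuple k n) := by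
  refine card_le_card_of_forall_subsingleton
    (fun b a => ∃ c, IsMonochromaticCell ℓ b c ∧ a + Pi.single c 1 = b) ?_ ?_
  · intro b hb
    obtain ⟨hb, c, hbc⟩ := hs b hb
    obtain ⟨a, ha, hab⟩ := hbc.exists_add_single hk hℓ hb
    exact ⟨a, ha, c, hbc, hab⟩
  · rintro a - b ⟨-, c, hb, hab⟩ b' ⟨-, c', hb', hab'⟩
    exact hb.eq_of_add_single hb' hab hab'

end SpernerLattice

open SpernerLattice in
/-- For every Sperner-admissible labeling `ℓ : V_{k,q} → {1,…,k}`
(with `k ≥ 2`, `q ≥ 1`), the number of lattice points `b ∈ V_{k,q-1}` whose cell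
`e(b)` is monochromatic under `ℓ` is at most `|V_{k,q-2}| = C(q+k-3, k-1)`. -/
theorem sperner_lattice_monochromatic_upper_bound (k q : ℕ) (hk : 2 ≤ k) (hq : 1 ≤ q)
    (ℓ : (Fin k → ℕ) → Fin k)
    (hℓ : ∀ a : Fin k → ℕ, (∑ i, a i) = q → 0 < a (ℓ a)) :
    ((Finset.Nat.antidiagonalTuple k (q - 1)).filter fun b =>
        ∃ c : Fin k, ∀ i : Fin k,
          ℓ (fun t => b t + if t = i then 1 else 0) = c).card ≤
      Nat.choose (q + k - 3) (k - 1) := by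
  have hcell (b : Fin k → ℕ) (i : Fin k) :
      (fun t => b t + if t = i then 1 else 0) = b + Pi.single i 1 := by
    ext t; simp [Pi.single_apply]
  set S := (Finset.Nat.antidiagonalTuple k (q - 1)).filter fun b =>
    ∃ c : Fin k, ∀ i : Fin k, ℓ (fun t => b t + if t = i then 1 else 0) = c
  have hS : ∀ b ∈ S, b ∈ Nat.antidiagonalTuple k (q - 1) ∧ ∃ c, IsMonochromaticCell ℓ b c := by
    intro b hb
    simp only [S, mem_filter, hcell] at hb
    exact hb
  -- at `q = 1` the bound `C(k-2, k-1)` is `0`, not `|V_{k,0}|`: there `S` must be shown empty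
  obtain ⟨n, rfl⟩ | rfl : (∃ n, q = n + 2) ∨ q = 1 := by
    rcases Nat.exists_eq_add_of_le hq with ⟨_ | n, rfl⟩
    · exact Or.inr rfl
    · exact Or.inl ⟨n, by omega⟩
  · calc #S ≤ #(Nat.antidiagonalTuple k n) := card_le_of_forall_isMonochromaticCell hk hℓ S hS
      _ = (n + 2 + k - 3).choose (k - 1) := by
        rw [Nat.card_antidiagonalTuple, show k + n - 1 = k - 1 + n by omega,
          show n + 2 + k - 3 = k - 1 + n by omega, Nat.choose_symm_add]
  · suffices S = ∅ by simp [this]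
    refine eq_empty_of_forall_notMem fun b hb => ?_
    obtain ⟨hb0, c, hbc⟩ := hS b hb
    have hpos := hbc.pos hk hℓ hb0
    rw [Nat.antidiagonalTuple_zero_right, mem_singleton] at hb0
    simp [hb0] at hpos
end

section
/- Let k ≥ 2 and let (A_1,…,A_k) be a Sperner-admissible partition of Δ_k. Let ε₀ = inf { x_i : i ∈ {1,…,k}, x ∈ A_i }. Then ε₀ > 0, and for every ε with 0 < ε < ε₀/2, the (k−1)-dimensional Hausdorff measure of the ε-neighborhood of the separating set satisfies μ^{k-1}(S_ε) ≥ (1 − (1 − ε√2)^{k−1})·μ^{k-1}(Δ_k), where S = ∪_{i≠j}(A_i ∩ A_j) and S_ε = { x ∈ Δ_k : dist(x, S) ≤ ε }. -/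
/-!
Put `c = ε√2` and let `h_i` be the homothety of ratio `1 - c` centred at the vertex `e_i`. Since
`c < ε₀`, the `i`-th coordinate of every point of `A_i` is at least `c`, so `h_i⁻¹(A_i) ⊆ Δ`. Let
`Q_i = h_i⁻¹ {x ∈ A_i | dist(x, S) > ε}`. For `i ≠ j` the points `h_i y` and `h_j y` are `c√2 = 2ε`
apart, and the segment joining them lies in `Δ`, hence is covered by the closed sets `A_m` and,
being connected, meets `S`; so one of the two points is within `ε` of `S`, and the `Q_i` are pairwise
disjoint. As `h_i` scales `μ^{k-1}` by `(1 - c)^{k-1}` and `Δ \ S_ε ⊆ ⋃ h_i(Q_i)`, we get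
`μ(Δ \ S_ε) ≤ (1 - c)^{k-1} μ(Δ)`, and `μ(Δ)` is finite since `Δ` is a Lipschitz image of a cube
in `ℝ^{k-1}`.
-/

open MeasureTheory Function

def euclideanSimplex (ι : Type*) [Fintype ι] : Set (EuclideanSpace ℝ ι) :=
  WithLp.ofLp ⁻¹' stdSimplex ℝ ι

def separatingSet {ι α : Type*} (A : ι → Set α) : Set α :=
  ⋃ (i) (j) (_ : i ≠ j), A i ∩ A j

theorem dist_homothety_homothety {V : Type*} [NormedAddCommGroup V] [NormedSpace ℝ V]
    (a b y : V) (r : ℝ) :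
    dist (AffineMap.homothety a r y) (AffineMap.homothety b r y) = |1 - r| * dist a b := by
  have : AffineMap.homothety a r y - AffineMap.homothety b r y = (1 - r) • (a - b) := by
    simp only [AffineMap.homothety_apply, vsub_eq_sub, vadd_eq_add]
    module
  rw [dist_eq_norm, this, norm_smul, Real.norm_eq_abs, dist_eq_norm]

theorem hausdorffMeasure_eq_ofReal_rpow_mul_preimage_homothety {V P : Type*}
    [NormedAddCommGroup V] [NormedSpace ℝ V] [MetricSpace P] [NormedAddTorsor V P]
    [MeasurableSpace P] [BorelSpace P] {d r : ℝ} (hd : 0 ≤ d) (hr : 0 < r) (a : P) (s : Set P) :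
    μH[d] s = ENNReal.ofReal (r ^ d) * μH[d] (AffineMap.homothety a r ⁻¹' s) := by
  have hsurj : Surjective (AffineMap.homothety a r) := fun x =>
    ⟨AffineMap.homothety a r⁻¹ x, by
      rw [← AffineMap.homothety_mul_apply, mul_inv_cancel₀ hr.ne', AffineMap.homothety_one,
        AffineMap.id_apply]⟩
  conv_lhs => rw [← Set.image_preimage_eq s hsurj]
  rw [hausdorffMeasure_homothety_image hd a hr.ne', ENNReal.smul_def, smul_eq_mul,
    ENNReal.coe_rpow_of_nonneg _ hd, ← ENNReal.ofReal_rpow_of_nonneg hr.le hd,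
    ← Real.enorm_eq_ofReal hr.le]
  rfl

theorem ofReal_one_sub_mul_le_of_le_add_mul {a s : ENNReal} {r : ℝ} (hr : 0 ≤ r)
    (ha : a ≠ ⊤) (h : a ≤ s + ENNReal.ofReal r * a) : ENNReal.ofReal (1 - r) * a ≤ s := by
  rw [ENNReal.ofReal_sub _ hr, ENNReal.ofReal_one, ENNReal.sub_mul fun _ _ => ha, one_mul]
  exact tsub_le_iff_right.2 h

theorem exists_mem_segment_inter_separatingSet {E ι : Type*} [AddCommGroup E] [Module ℝ E]
    [TopologicalSpace E] [IsTopologicalAddGroup E] [ContinuousSMul ℝ E] [Finite ι]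
    {A : ι → Set E} (hA : ∀ i, IsClosed (A i)) {x y : E} (hxy : segment ℝ x y ⊆ ⋃ i, A i)
    {i j : ι} (hij : i ≠ j) (hx : x ∈ A i) (hy : y ∈ A j) :
    (segment ℝ x y ∩ separatingSet A).Nonempty := by
  classical
  have hB : IsClosed (⋃ m ∈ ({i}ᶜ : Set ι), A m) :=
    (Set.toFinite _).isClosed_biUnion fun m _ => hA m
  have hsplit : segment ℝ x y ⊆ A i ∪ ⋃ m ∈ ({i}ᶜ : Set ι), A m := by
    intro z hz
    obtain ⟨m, hm⟩ := Set.mem_iUnion.1 (hxy hz)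
    by_cases hmi : m = i
    · exact Or.inl (hmi ▸ hm)
    · exact Or.inr (Set.mem_biUnion hmi hm)
  obtain ⟨z, hz, hzi, hzB⟩ := isPreconnected_closed_iff.1 (convex_segment x y).isPreconnected
    (A i) _ (hA i) hB hsplit ⟨x, left_mem_segment ℝ x y, hx⟩
    ⟨y, right_mem_segment ℝ x y, Set.mem_biUnion hij.symm hy⟩
  obtain ⟨m, hmi, hzm⟩ := Set.mem_iUnion₂.1 hzB
  exact ⟨z, hz, Set.mem_iUnion₂.2 ⟨i, m, Set.mem_iUnion.2 ⟨Ne.symm hmi, hzi, hzm⟩⟩⟩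

theorem infDist_add_infDist_separatingSet_le {E ι : Type*} [NormedAddCommGroup E]
    [NormedSpace ℝ E] [Finite ι] {A : ι → Set E} (hA : ∀ i, IsClosed (A i)) {x y : E}
    (hxy : segment ℝ x y ⊆ ⋃ i, A i) {i j : ι} (hij : i ≠ j) (hx : x ∈ A i)
    (hy : y ∈ A j) :
    Metric.infDist x (separatingSet A) + Metric.infDist y (separatingSet A) ≤ dist x y := by
  obtain ⟨z, hz, hzS⟩ := exists_mem_segment_inter_separatingSet hA hxy hij hx hy
  calc Metric.infDist x (separatingSet A) + Metric.infDist y (separatingSet A)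
      ≤ dist x z + dist z y := by
        rw [dist_comm z y]
        exact add_le_add (Metric.infDist_le_dist_of_mem hzS) (Metric.infDist_le_dist_of_mem hzS)
    _ = dist x y := dist_add_dist_of_mem_segment hz

section Simplex

variable {ι : Type*} [Fintype ι]

theorem isCompact_euclideanSimplex : IsCompact (euclideanSimplex ι) :=
  (PiLp.homeomorph 2 _).isCompact_preimage.2 (isCompact_stdSimplex ℝ ι)

theorem convex_euclideanSimplex : Convex ℝ (euclideanSimplex ι) :=
  (convex_stdSimplex ℝ ι).linear_preimage (WithLp.linearEquiv 2 ℝ (ι → ℝ)).toLinearMap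

theorem homothety_apply_coord (a y : EuclideanSpace ℝ ι) (r : ℝ) (m : ι) :
    AffineMap.homothety a r y m = r * y m + (1 - r) * a m := by
  simp only [AffineMap.homothety_apply, vsub_eq_sub, vadd_eq_add, PiLp.add_apply,
    PiLp.smul_apply, PiLp.sub_apply, smul_eq_mul]
  ring

theorem dist_single_single_of_ne [DecidableEq ι] {i j : ι} (h : i ≠ j) :
    dist (EuclideanSpace.single i (1 : ℝ)) (EuclideanSpace.single j 1) = √2 := by
  rw [EuclideanSpace.dist_eq]
  congr 1
  simp only [PiLp.single_apply, Real.dist_eq, sq_abs]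
  rw [Fintype.sum_eq_add i j h]
  · norm_num [h, h.symm]
  · intro m hm; simp [hm.1, hm.2]

theorem mem_euclideanSimplex_of_homothety_mem [DecidableEq ι] {i : ι} {c : ℝ}
    {y : EuclideanSpace ℝ ι} (hc : c < 1)
    (hy : AffineMap.homothety (EuclideanSpace.single i 1) (1 - c) y ∈ euclideanSimplex ι)
    (hci : c ≤ AffineMap.homothety (EuclideanSpace.single i 1) (1 - c) y i) :
    y ∈ euclideanSimplex ι := by
  have h1c : 0 < 1 - c := sub_pos.2 hc
  obtain ⟨hnonneg, hsum⟩ := hy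
  simp only [homothety_apply_coord, PiLp.single_apply, sub_sub_cancel] at hnonneg hsum hci
  refine ⟨fun m => (mul_nonneg_iff_of_pos_left h1c).1 ?_, ?_⟩
  · by_cases hm : m = i
    · subst hm
      simpa using hci
    · simpa [hm] using hnonneg m
  · simp only [Finset.sum_add_distrib, ← Finset.mul_sum, mul_ite, mul_one, mul_zero,
      Finset.sum_ite_eq', Finset.mem_univ, if_true] at hsum
    exact (mul_eq_left₀ h1c.ne').1 (by linarith)

theorem pairwise_disjoint_preimage_homothety [DecidableEq ι]
    {A : ι → Set (EuclideanSpace ℝ ι)} (hA : ∀ i, IsClosed (A i))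
    (hcover : ⋃ i, A i = euclideanSimplex ι) {ε : ℝ} (hε : 0 ≤ ε) :
    Pairwise (Disjoint on fun i : ι =>
      AffineMap.homothety (EuclideanSpace.single i 1) (1 - ε * √2) ⁻¹'
        (A i ∩ {x | ε < Metric.infDist x (separatingSet A)})) := by
  intro i j hij
  refine Set.disjoint_left.2 fun y ⟨hyi, hi⟩ ⟨hyj, hj⟩ => ?_
  set h := fun i : ι => AffineMap.homothety (EuclideanSpace.single i (1 : ℝ)) (1 - ε * √2)
  have hA_sub : ∀ i, A i ⊆ euclideanSimplex ι := fun i => hcover ▸ Set.subset_iUnion A i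
  have hseg : segment ℝ (h i y) (h j y) ⊆ ⋃ m, A m := hcover ▸
    convex_euclideanSimplex.segment_subset (hA_sub i hyi) (hA_sub j hyj)
  have hdist : dist (h i y) (h j y) = 2 * ε := by
    rw [dist_homothety_homothety, dist_single_single_of_ne hij, sub_sub_cancel,
      abs_of_nonneg (by positivity), mul_assoc, Real.mul_self_sqrt zero_le_two, mul_comm]
  have hi : ε < Metric.infDist (h i y) (separatingSet A) := hi
  have hj : ε < Metric.infDist (h j y) (separatingSet A) := hj
  linarith [infDist_add_infDist_separatingSet_le hA hseg hij hyi hyj]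

theorem ofReal_one_sub_rpow_mul_hausdorffMeasure_le
    {A : ι → Set (EuclideanSpace ℝ ι)} (hA : ∀ i, IsClosed (A i))
    (hcover : ⋃ i, A i = euclideanSimplex ι) {ε : ℝ} (hε : 0 ≤ ε) (hε1 : ε * √2 < 1)
    (hεA : ∀ i, ∀ x ∈ A i, ε * √2 ≤ x i) {d : ℝ} (hd : 0 ≤ d)
    (hfin : μH[d] (euclideanSimplex ι) ≠ ⊤) :
    ENNReal.ofReal (1 - (1 - ε * √2) ^ d) * μH[d] (euclideanSimplex ι) ≤
      μH[d] {x ∈ euclideanSimplex ι | Metric.infDist x (separatingSet A) ≤ ε} := by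
  classical
  set Δ := euclideanSimplex ι
  set Sε := {x ∈ Δ | Metric.infDist x (separatingSet A) ≤ ε}
  set r := 1 - ε * √2
  have hr : 0 < r := sub_pos.2 hε1
  set P := fun i => A i ∩ {x | ε < Metric.infDist x (separatingSet A)}
  set Q := fun i => AffineMap.homothety (EuclideanSpace.single i 1) r ⁻¹' P i
  have hQ_meas : ∀ i, MeasurableSet (Q i) := fun i =>
    ((hA i).measurableSet.inter (measurableSet_lt measurable_const
      (Metric.continuous_infDist_pt _).measurable)).preimage
      (AffineMap.homothety_continuous _ _).measurable
  have hA_sub : ∀ i, A i ⊆ Δ := fun i => hcover ▸ Set.subset_iUnion A i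
  have hQ_sub : ∀ i, Q i ⊆ Δ := fun i y hy =>
    mem_euclideanSimplex_of_homothety_mem hε1 (hA_sub i hy.1) (hεA i _ hy.1)
  have hΔ_diff : Δ \ {x | Metric.infDist x (separatingSet A) ≤ ε} ⊆ ⋃ i, P i := by
    rintro x ⟨hxΔ, hxS⟩
    obtain ⟨i, hi⟩ := Set.mem_iUnion.1 (hcover.symm ▸ hxΔ)
    exact Set.mem_iUnion_of_mem i ⟨hi, show ε < _ from not_le.1 hxS⟩
  refine ofReal_one_sub_mul_le_of_le_add_mul (by positivity) hfin ?_
  calc μH[d] Δ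
      ≤ μH[d] Sε + μH[d] (Δ \ {x | Metric.infDist x (separatingSet A) ≤ ε}) :=
        measure_le_inter_add_sdiff _ _ _
    _ ≤ μH[d] Sε + ∑ i, μH[d] (P i) :=
        add_le_add le_rfl ((measure_mono hΔ_diff).trans (measure_iUnion_fintype_le _ _))
    _ = μH[d] Sε + ENNReal.ofReal (r ^ d) * ∑ i, μH[d] (Q i) := by
        simp_rw [Finset.mul_sum, Q,
          ← hausdorffMeasure_eq_ofReal_rpow_mul_preimage_homothety hd hr]
    _ = μH[d] Sε + ENNReal.ofReal (r ^ d) * μH[d] (⋃ i, Q i) := by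
        rw [measure_iUnion (pairwise_disjoint_preimage_homothety hA hcover hε) hQ_meas,
          tsum_fintype]
    _ ≤ μH[d] Sε + ENNReal.ofReal (r ^ d) * μH[d] Δ := by
        gcongr
        exact Set.iUnion_subset hQ_sub

theorem sInf_coord_mem {A : ι → Set (EuclideanSpace ℝ ι)} (hA : ∀ i, IsCompact (A i))
    (hne : (⋃ i, A i).Nonempty) :
    sInf {r : ℝ | ∃ i, ∃ x ∈ A i, r = x i} ∈ {r : ℝ | ∃ i, ∃ x ∈ A i, r = x i} := by
  let coord := fun (i : ι) (x : EuclideanSpace ℝ ι) => x i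
  have hR : {r : ℝ | ∃ i, ∃ x ∈ A i, r = x i} = ⋃ i, coord i '' A i := by
    ext r
    simp only [Set.mem_ofPred_eq, Set.mem_iUnion, Set.mem_image, eq_comm, coord]
  obtain ⟨i, hi⟩ := Set.mem_iUnion.1 hne.some_mem
  rw [hR]
  exact (isCompact_iUnion fun i => (hA i).image (PiLp.continuous_apply 2 _ i)).sInf_mem
    ⟨_, Set.mem_iUnion_of_mem i (Set.mem_image_of_mem (coord i) hi)⟩

end Simplex

theorem hausdorffMeasure_euclideanSimplex_lt_top (n : ℕ) :
    μH[n] (euclideanSimplex (Fin (n + 1))) < ⊤ := by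
  let e : Fin (n + 1) → EuclideanSpace ℝ (Fin (n + 1)) := fun i => EuclideanSpace.single i 1
  -- `L y + e (Fin.last n)` is the point `(y, 1 - ∑ j, y j)`
  let L : (Fin n → ℝ) →L[ℝ] EuclideanSpace ℝ (Fin (n + 1)) :=
    ∑ j, (ContinuousLinearMap.proj j).smulRight (e j.castSucc - e (Fin.last n))
  have hL : ∀ y, L y = ∑ j, y j • (e j.castSucc - e (Fin.last n)) := by
    intro y; simp [L]
  have hcover : euclideanSimplex (Fin (n + 1)) ⊆
      (fun y => L y + e (Fin.last n)) '' Set.Icc 0 1 := by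
    intro x hx
    refine ⟨fun j => x j.castSucc, ⟨fun j => (mem_Icc_of_mem_stdSimplex hx _).1,
      fun j => (mem_Icc_of_mem_stdSimplex hx _).2⟩, ?_⟩
    have hsum := hx.2
    rw [Fin.sum_univ_castSucc] at hsum
    ext m
    induction m using Fin.lastCases with
    | last => simpa [hL, e] using (eq_neg_add_of_add_eq hsum).symm
    | cast m => simp [hL, e, Pi.single_apply]
  have hLip : LipschitzWith ‖L‖₊ (fun y => L y + e (Fin.last n)) := by
    simpa using L.lipschitz.add (LipschitzWith.const (e (Fin.last n)))
  calc μH[n] (euclideanSimplex (Fin (n + 1)))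
      ≤ μH[n] ((fun y => L y + e (Fin.last n)) '' Set.Icc 0 1) := measure_mono hcover
    _ ≤ ‖L‖₊ ^ (n : ℝ) * μH[n] (Set.Icc (0 : Fin n → ℝ) 1) :=
        hLip.hausdorffMeasure_image_le (Nat.cast_nonneg n) _
    _ < ⊤ := by
        refine ENNReal.mul_lt_top (by simp) ?_
        have hvol : (μH[n] : Measure (Fin n → ℝ)) = volume := by
          simpa using hausdorffMeasure_pi_real (ι := Fin n)
        rw [hvol]
        exact isCompact_Icc.measure_lt_top

theorem separating_set_neighborhood_measure_lower_bound_general (k : ℕ) (hk : 2 ≤ k)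
    (A : Fin k → Set (EuclideanSpace ℝ (Fin k)))
    (Δ : Set (EuclideanSpace ℝ (Fin k)))
    (hΔ : Δ = {x : EuclideanSpace ℝ (Fin k) | (∀ i, 0 ≤ x i) ∧ ∑ i, x i = 1})
    (hclosed : ∀ i, IsClosed (A i))
    (hcover : (⋃ i, A i) = Δ)
    (hadm : ∀ i, ∀ x ∈ A i, 0 < x i)
    (ε₀ : ℝ) (hε₀ : ε₀ = sInf {r : ℝ | ∃ i : Fin k, ∃ x ∈ A i, r = x i}) :
    0 < ε₀ ∧
    ∀ ε : ℝ, 0 < ε → ε < ε₀ / 2 →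
      ENNReal.ofReal (1 - (1 - ε * Real.sqrt 2) ^ (k - 1)) * μH[(k : ℝ) - 1] Δ ≤
        μH[(k : ℝ) - 1]
          {x ∈ Δ | Metric.infDist x (⋃ (i) (j) (_ : i ≠ j), A i ∩ A j) ≤ ε} := by
  obtain ⟨n, rfl⟩ : ∃ n, k = n + 1 := ⟨k - 1, by omega⟩
  obtain rfl : Δ = euclideanSimplex (Fin (n + 1)) := hΔ
  have hA_sub : ∀ i, A i ⊆ euclideanSimplex (Fin (n + 1)) := fun i =>
    hcover ▸ Set.subset_iUnion A i
  have hne : (⋃ i, A i).Nonempty :=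
    hcover ▸ ⟨WithLp.toLp 2 (Pi.single 0 1), single_mem_stdSimplex ℝ (0 : Fin (n + 1))⟩
  obtain ⟨i₀, x₀, hx₀, hε₀x₀⟩ := hε₀ ▸ sInf_coord_mem
    (fun i => isCompact_euclideanSimplex.of_isClosed_subset (hclosed i) (hA_sub i)) hne
  have hε₀_le : ∀ i, ∀ x ∈ A i, ε₀ ≤ x i := fun i x hx =>
    hε₀ ▸ csInf_le ⟨0, by rintro _ ⟨j, y, hy, rfl⟩; exact (hadm j y hy).le⟩ ⟨i, x, hx, rfl⟩
  refine ⟨hε₀x₀ ▸ hadm i₀ x₀ hx₀, fun ε hε hεε₀ => ?_⟩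
  have hε₀_le_one : ε₀ ≤ 1 := hε₀x₀ ▸ (mem_Icc_of_mem_stdSimplex (hA_sub i₀ hx₀) i₀).2
  have hc : ε * √2 < ε₀ := by
    nlinarith [(Real.sqrt_lt' two_pos).2 (by norm_num : (2 : ℝ) < 2 ^ 2)]
  have key := ofReal_one_sub_rpow_mul_hausdorffMeasure_le hclosed hcover hε.le
    (hc.trans_le hε₀_le_one) (fun i x hx => hc.le.trans (hε₀_le i x hx)) (Nat.cast_nonneg n)
    (hausdorffMeasure_euclideanSimplex_lt_top n).ne
  simpa only [Nat.cast_add, Nat.cast_one, add_sub_cancel_right, Nat.add_sub_cancel,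
    Real.rpow_natCast, separatingSet] using key

/-- For a Sperner-admissible partition `(A_1,…,A_k)` of `Δ_k` (`k ≥ 2`),
let `ε₀ = inf {x_i : i ∈ [k], x ∈ A_i}`. Then `ε₀ > 0` and for every `0 < ε < ε₀/2`,
`μH^{k-1}(S_ε) ≥ (1 − (1 − ε√2)^{k-1})·μH^{k-1}(Δ_k)`, where `S` is the separating set
and `S_ε = {x ∈ Δ_k : dist(x,S) ≤ ε}`. -/
theorem separating_set_neighborhood_measure_lower_bound (k : ℕ) (hk : 2 ≤ k)
    (A : Fin k → Set (EuclideanSpace ℝ (Fin k)))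
    (Δ : Set (EuclideanSpace ℝ (Fin k)))
    (hΔ : Δ = {x : EuclideanSpace ℝ (Fin k) | (∀ i, 0 ≤ x i) ∧ ∑ i, x i = 1})
    (hclosed : ∀ i, IsClosed (A i))
    (hcover : (⋃ i, A i) = Δ)
    (hbd : ∀ i j, i ≠ j → A i ∩ A j ⊆ frontier (A i) ∩ frontier (A j))
    (hadm : ∀ i, ∀ x ∈ A i, 0 < x i)
    (ε₀ : ℝ) (hε₀ : ε₀ = sInf {r : ℝ | ∃ i : Fin k, ∃ x ∈ A i, r = x i}) :
    0 < ε₀ ∧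
    ∀ ε : ℝ, 0 < ε → ε < ε₀ / 2 →
      ENNReal.ofReal (1 - (1 - ε * Real.sqrt 2) ^ (k - 1)) * μH[(k : ℝ) - 1] Δ ≤
        μH[(k : ℝ) - 1]
          {x ∈ Δ | Metric.infDist x (⋃ (i) (j) (_ : i ≠ j), A i ∩ A j) ≤ ε} :=
  separating_set_neighborhood_measure_lower_bound_general k hk A Δ hΔ hclosed hcover hadm ε₀ hε₀
end

section
/- Let k ≥ 2 and consider the Voronoi partition of Δ_k given by A*_i = { x ∈ Δ_k : x_i = max_{1≤j≤k} x_j }, with separating set S* = { x ∈ Δ_k : ∃ i ≠ j with x_i = x_j = max_{1≤ℓ≤k} x_ℓ }. Then for every ε with 0 < ε ≤ 1/(2k): (1) the ε-neighborhood of S* in Δ_k is exactly S*_ε = Δ_k \ ∪_{i=1}^k { x ∈ Δ_k : x_i > ε√2 + max_{ℓ≠i} x_ℓ }; and (2) μ^{k-1}(S*_ε) = (1 − (1 − ε√2)^{k−1})·μ^{k-1}(Δ_k). -/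
/-!
Let `x ∈ Δ` have largest coordinate `x i` and runner-up `x j`. Then the distance from `x` to `S*`
is exactly `(x i - x j) / √2`: moving `x` along `e_j - e_i` until the two top coordinates agree
lands in `S*` after distance `(x i - x j) / √2`; conversely every `y ∈ S*` has some `a ≠ i`
with `y i ≤ y a`, and Cauchy–Schwarz against `e_i - e_a` gives
`√2 ‖x - y‖ ≥ x i - x a ≥ x i - x j`. This is (1).

For (2) put `t = ε√2 < 1`. The set of points of `Δ` whose `i`-th coordinate beats all others by
more than `t` is the image of the open Voronoi cell (`t = 0`) under the homothety of ratio `1 - t`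
centred at the vertex `e_i`, so its measure is `(1 - t)^(k-1)` times that of the open cell. The
open cells are disjoint and cover `Δ` up to `S*`, which is null. Nullity of `S*` and finiteness of
`μH[k-1] Δ` are read off in the chart `v ↦ centroid + v` from the sum-zero hyperplane, an
isometry on whose domain `μH[k-1]` is an additive Haar measure: `Δ` pulls back to a compact set
and each tie `x i = x j` to a proper subspace.
-/

open MeasureTheory Metric Set Function
open scoped RealInnerProductSpace
open EuclideanSpace (single projₗ)

namespace Voronoi

variable {ι : Type*}

lemma exists_max_and_runnerUp [Finite ι] [Nontrivial ι] (x : ι → ℝ) :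
    ∃ i j, j ≠ i ∧ (∀ l, x l ≤ x i) ∧ ∀ l, l ≠ i → x l ≤ x j := by
  obtain ⟨i, hi⟩ := Finite.exists_max x
  have : Nonempty {l // l ≠ i} := nonempty_subtype.2 (exists_ne i)
  obtain ⟨⟨j, hji⟩, hj⟩ := Finite.exists_max fun l : {l // l ≠ i} => x l
  exact ⟨i, j, hji, hi, fun l hl => hj ⟨l, hl⟩⟩

lemma exists_margin_iff {x : ι → ℝ} {i j : ι} (hji : j ≠ i) (hi : ∀ l, x l ≤ x i)
    (hj : ∀ l, l ≠ i → x l ≤ x j) (t : ℝ) :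
    (∃ i', ∀ l, l ≠ i' → t + x l < x i') ↔ t < x i - x j := by
  refine ⟨fun ⟨i', hi'⟩ => ?_, fun h => ⟨i, fun l hl => by linarith [hj l hl]⟩⟩
  by_cases h : i' = i
  · subst h
    linarith [hi' j hji]
  · linarith [hi' i (Ne.symm h), hi i', hi j]

variable [Fintype ι]

def simplex (ι : Type*) [Fintype ι] : Set (EuclideanSpace ℝ ι) :=
  WithLp.ofLp ⁻¹' stdSimplex ℝ ι

def separatingSet (ι : Type*) [Fintype ι] : Set (EuclideanSpace ℝ ι) :=
  {x ∈ simplex ι | ∃ i j, i ≠ j ∧ (∀ l, x l ≤ x i) ∧ x i = x j}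

def marginCell (i : ι) (t : ℝ) : Set (EuclideanSpace ℝ ι) :=
  {x ∈ simplex ι | ∀ l, l ≠ i → t + x l < x i}

noncomputable def coordSum (ι : Type*) [Fintype ι] : EuclideanSpace ℝ ι →ₗ[ℝ] ℝ :=
  ∑ i, projₗ i

lemma coordSum_apply (x : EuclideanSpace ℝ ι) : coordSum ι x = ∑ i, x i := by
  simp [coordSum]

@[simp]
lemma coordSum_single [DecidableEq ι] (i : ι) (a : ℝ) : coordSum ι (single i a) = a := by
  simp [coordSum_apply]

lemma mem_simplex {x : EuclideanSpace ℝ ι} :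
    x ∈ simplex ι ↔ (∀ i, 0 ≤ x i) ∧ coordSum ι x = 1 := by
  simp [simplex, stdSimplex, coordSum_apply]

lemma marginCell_subset_simplex (i : ι) (t : ℝ) : marginCell i t ⊆ simplex ι :=
  sep_subset _ _

lemma inner_single_sub_single [DecidableEq ι] (x : EuclideanSpace ℝ ι) (i j : ι) :
    ⟪x, single i 1 - single j 1⟫ = x i - x j := by
  simp [inner_sub_right, EuclideanSpace.inner_single_right]

lemma norm_single_sub_single [DecidableEq ι] {i j : ι} (h : i ≠ j) :
    ‖(single i 1 - single j 1 : EuclideanSpace ℝ ι)‖ = √2 := by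
  rw [← Real.sqrt_sq (norm_nonneg _), ← real_inner_self_eq_norm_sq, inner_single_sub_single]
  norm_num [h, h.symm]

lemma sub_sub_sub_le_sqrt_two_mul_dist {i j : ι} (h : i ≠ j) (x y : EuclideanSpace ℝ ι) :
    (x i - x j) - (y i - y j) ≤ √2 * dist x y := by
  classical
  calc (x i - x j) - (y i - y j)
      = ⟪x - y, single i 1 - single j 1⟫ := by
        rw [inner_single_sub_single]; simp only [PiLp.sub_apply]; ring
    _ ≤ ‖x - y‖ * ‖(single i 1 - single j 1 : EuclideanSpace ℝ ι)‖ :=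
        real_inner_le_norm _ _
    _ = √2 * dist x y := by rw [norm_single_sub_single h, dist_eq_norm, mul_comm]

lemma exists_ne_le_of_mem_separatingSet {y : EuclideanSpace ℝ ι} (hy : y ∈ separatingSet ι)
    (i : ι) : ∃ a, a ≠ i ∧ y i ≤ y a := by
  obtain ⟨-, p, q, hpq, hp, hpq'⟩ := hy
  by_cases hpi : p = i
  · subst hpi
    exact ⟨q, hpq.symm, hpq'.le⟩
  · exact ⟨p, hpi, hp i⟩

lemma div_sqrt_two_le_dist_of_mem_separatingSet {x y : EuclideanSpace ℝ ι} {i j : ι}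
    (hj : ∀ l, l ≠ i → x l ≤ x j) (hy : y ∈ separatingSet ι) :
    (x i - x j) / √2 ≤ dist x y := by
  obtain ⟨a, hai, hya⟩ := exists_ne_le_of_mem_separatingSet hy i
  rw [div_le_iff₀ (by positivity), mul_comm]
  linarith [sub_sub_sub_le_sqrt_two_mul_dist hai.symm x y, hj a hai]

lemma exists_mem_separatingSet_dist_eq {x : EuclideanSpace ℝ ι} (hx : x ∈ simplex ι)
    {i j : ι} (hji : j ≠ i) (hi : ∀ l, x l ≤ x i) (hj : ∀ l, l ≠ i → x l ≤ x j) :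
    ∃ y ∈ separatingSet ι, dist x y = (x i - x j) / √2 := by
  classical
  rw [mem_simplex] at hx
  set δ := x i - x j
  have hδ0 : 0 ≤ δ := by linarith [hi j]
  set y := x + (δ / 2) • (single j 1 - single i 1) with hy
  have hyi : y i = (x i + x j) / 2 := by simp [y, hji.symm]; ring
  have hyj : y j = (x i + x j) / 2 := by simp [y, hji]; ring
  have hyl : ∀ l, l ≠ i → l ≠ j → y l = x l := by intro l hli hlj; simp [y, hli, hlj]
  refine ⟨y, ⟨mem_simplex.2 ⟨fun l => ?_, ?_⟩, i, j, hji.symm, fun l => ?_,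
    hyi.trans hyj.symm⟩, ?_⟩
  · by_cases hli : l = i
    · subst hli; rw [hyi]; linarith [hx.1 l, hx.1 j]
    by_cases hlj : l = j
    · subst hlj; rw [hyj]; linarith [hx.1 i, hx.1 l]
    rw [hyl l hli hlj]; exact hx.1 l
  · rw [hy, map_add, map_smul, map_sub, coordSum_single, coordSum_single, hx.2]
    simp
  · by_cases hli : l = i
    · rw [hli]
    by_cases hlj : l = j
    · rw [hlj, hyj, hyi]
    rw [hyl l hli hlj, hyi]; linarith [hj l hli, hi j]
  · rw [dist_eq_norm, hy, sub_add_cancel_left, norm_neg, norm_smul, norm_single_sub_single hji,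
      Real.norm_of_nonneg (by positivity)]
    field_simp
    rw [Real.sq_sqrt (by norm_num)]

lemma infDist_separatingSet {x : EuclideanSpace ℝ ι} (hx : x ∈ simplex ι) {i j : ι}
    (hji : j ≠ i) (hi : ∀ l, x l ≤ x i) (hj : ∀ l, l ≠ i → x l ≤ x j) :
    infDist x (separatingSet ι) = (x i - x j) / √2 := by
  obtain ⟨y, hy, hxy⟩ := exists_mem_separatingSet_dist_eq hx hji hi hj
  refine le_antisymm (hxy ▸ infDist_le_dist_of_mem hy) ?_
  exact (le_infDist ⟨y, hy⟩).2 fun z hz => div_sqrt_two_le_dist_of_mem_separatingSet hj hz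

theorem setOf_infDist_separatingSet_le [Nontrivial ι] (ε : ℝ) :
    {x ∈ simplex ι | infDist x (separatingSet ι) ≤ ε} =
      simplex ι \ ⋃ i : ι, marginCell i (ε * √2) := by
  ext x
  simp only [mem_ofPred_eq, mem_sdiff, mem_iUnion, marginCell, and_congr_right_iff]
  intro hx
  obtain ⟨i, j, hji, hi, hj⟩ := exists_max_and_runnerUp x.ofLp
  rw [infDist_separatingSet hx hji hi hj, div_le_iff₀ (by positivity), ← not_lt,
    ← exists_margin_iff hji hi hj]
  simp [hx]

noncomputable def centroid (ι : Type*) [Fintype ι] : EuclideanSpace ℝ ι :=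
  WithLp.toLp 2 fun _ => (Fintype.card ι : ℝ)⁻¹

@[simp]
lemma centroid_apply (i : ι) : centroid ι i = (Fintype.card ι : ℝ)⁻¹ := rfl

lemma coordSum_centroid [Nonempty ι] : coordSum ι (centroid ι) = 1 := by
  simp [coordSum_apply]

noncomputable def sumZero (ι : Type*) [Fintype ι] : Submodule ℝ (EuclideanSpace ℝ ι) :=
  LinearMap.ker (coordSum ι)

@[simp]
lemma mem_sumZero {v : EuclideanSpace ℝ ι} : v ∈ sumZero ι ↔ coordSum ι v = 0 :=
  LinearMap.mem_ker

lemma finrank_sumZero [Nonempty ι] :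
    Module.finrank ℝ (sumZero ι) = Fintype.card ι - 1 := by
  classical
  have hne : coordSum ι ≠ 0 := fun h => by
    simpa using LinearMap.congr_fun h (single (Classical.arbitrary ι) 1)
  have := Module.Dual.finrank_ker_add_one_of_ne_zero hne
  rw [finrank_euclideanSpace] at this
  rw [sumZero]
  omega

lemma isometry_centroid_add :
    Isometry fun v : sumZero ι => centroid ι + v :=
  (IsometryEquiv.addLeft (centroid ι)).isometry.comp isometry_subtype_coe

lemma hausdorffMeasure_eq_preimage_centroid_add [Nonempty ι] {d : ℝ} (hd : 0 ≤ d)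
    {s : Set (EuclideanSpace ℝ ι)} (hs : ∀ x ∈ s, coordSum ι x = 1) :
    μH[d] s = μH[d] ((fun v : sumZero ι => centroid ι + v) ⁻¹' s) := by
  rw [← (isometry_centroid_add (ι := ι)).hausdorffMeasure_image (Or.inl hd),
    image_preimage_eq_of_subset]
  intro x hx
  refine ⟨⟨x - centroid ι, ?_⟩, add_sub_cancel _ _⟩
  rw [mem_sumZero, map_sub, hs x hx, coordSum_centroid, sub_self]

lemma card_sub_one_cast [Nonempty ι] :
    (Fintype.card ι : ℝ) - 1 = (Fintype.card ι - 1 : ℕ) := by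
  rw [Nat.cast_sub Fintype.card_pos, Nat.cast_one]

lemma card_sub_one_nonneg [Nonempty ι] : 0 ≤ (Fintype.card ι : ℝ) - 1 := by
  rw [card_sub_one_cast]
  positivity

lemma card_sub_one_eq_finrank [Nonempty ι] :
    (Fintype.card ι : ℝ) - 1 = Module.finrank ℝ (sumZero ι) := by
  rw [card_sub_one_cast, finrank_sumZero]

lemma isCompact_simplex : IsCompact (simplex ι) :=
  (EuclideanSpace.equiv ι ℝ).toHomeomorph.isCompact_preimage.2 (isCompact_stdSimplex ℝ ι)

lemma hausdorffMeasure_simplex_lt_top [Nonempty ι] :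
    μH[(Fintype.card ι : ℝ) - 1] (simplex ι) < ⊤ := by
  rw [hausdorffMeasure_eq_preimage_centroid_add card_sub_one_nonneg
    fun x hx => (mem_simplex.1 hx).2, card_sub_one_eq_finrank]
  exact ((isometry_centroid_add (ι := ι)).isClosedEmbedding.isCompact_preimage
    isCompact_simplex).measure_lt_top

lemma hausdorffMeasure_setOf_coord_eq {i j : ι} (hij : i ≠ j) :
    μH[(Fintype.card ι : ℝ) - 1] {x : EuclideanSpace ℝ ι | coordSum ι x = 1 ∧ x i = x j} =
      0 := by
  classical
  have : Nonempty ι := ⟨i⟩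
  rw [hausdorffMeasure_eq_preimage_centroid_add card_sub_one_nonneg fun x hx => hx.1,
    card_sub_one_eq_finrank]
  let W : Submodule ℝ (sumZero ι) :=
    LinearMap.ker ((projₗ i - projₗ j) ∘ₗ (sumZero ι).subtype)
  have hW : W ≠ ⊤ := by
    intro h
    have hv : single i 1 - single j 1 ∈ sumZero ι := by
      simp
    have : (⟨_, hv⟩ : sumZero ι) ∈ W := h ▸ Submodule.mem_top
    simp [W, hij, hij.symm] at this
  have hpre : (fun v : sumZero ι => centroid ι + v) ⁻¹'
      {x | coordSum ι x = 1 ∧ x i = x j} = W := by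
    ext v
    have hv : coordSum ι v = 0 := mem_sumZero.1 v.2
    simp [W, coordSum_centroid, sub_eq_zero, hv]
  rw [hpre]
  exact Measure.addHaar_submodule _ W hW

lemma hausdorffMeasure_separatingSet :
    μH[(Fintype.card ι : ℝ) - 1] (separatingSet ι) = 0 := by
  refine measure_mono_null ?_ (measure_iUnion_null fun i => measure_iUnion_null fun j =>
    measure_iUnion_null fun hij : i ≠ j => hausdorffMeasure_setOf_coord_eq hij)
  rintro x ⟨hx, i, j, hij, -, hxij⟩
  exact mem_iUnion₂.2 ⟨i, j, mem_iUnion.2 ⟨hij, (mem_simplex.1 hx).2, hxij⟩⟩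

lemma measurableSet_marginCell (i : ι) (t : ℝ) : MeasurableSet (marginCell i t) := by
  have : marginCell i t = simplex ι ∩ ⋂ l, ⋂ (_ : l ≠ i), {x | t + x l < x i} := by
    ext; simp [marginCell]
  rw [this]
  exact isCompact_simplex.isClosed.measurableSet.inter
    (.iInter fun l => .iInter fun _ => measurableSet_lt (by fun_prop) (by fun_prop))

lemma pairwise_disjoint_marginCell {t : ℝ} (ht : 0 ≤ t) :
    Pairwise (Disjoint on fun i : ι => marginCell i t) := by
  intro i j hij
  refine Set.disjoint_left.2 fun x ⟨_, hxi⟩ ⟨_, hxj⟩ => ?_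
  linarith [hxi j hij.symm, hxj i hij]

lemma simplex_diff_iUnion_marginCell_zero_subset [Nontrivial ι] :
    simplex ι \ ⋃ i : ι, marginCell i 0 ⊆ separatingSet ι := by
  rintro x ⟨hx, hxU⟩
  obtain ⟨i, j, hji, hi, hj⟩ := exists_max_and_runnerUp x.ofLp
  have hij : ¬ 0 < x i - x j := by
    rw [← exists_margin_iff hji hi hj]
    exact fun ⟨i', hi'⟩ => hxU (mem_iUnion.2 ⟨i', hx, hi'⟩)
  exact ⟨hx, i, j, hji.symm, hi, by linarith [hi j]⟩

lemma hausdorffMeasure_iUnion_marginCell (d : ℝ) {t : ℝ} (ht : 0 ≤ t) :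
    μH[d] (⋃ i : ι, marginCell i t) = ∑ i : ι, μH[d] (marginCell i t) := by
  rw [measure_iUnion (pairwise_disjoint_marginCell ht) (measurableSet_marginCell · t),
    tsum_fintype]

lemma sum_hausdorffMeasure_marginCell_zero [Nontrivial ι] :
    ∑ i : ι, μH[(Fintype.card ι : ℝ) - 1] (marginCell i 0) =
      μH[(Fintype.card ι : ℝ) - 1] (simplex ι) := by
  rw [← hausdorffMeasure_iUnion_marginCell _ le_rfl]
  exact measure_eq_measure_of_null_sdiff (iUnion_subset (marginCell_subset_simplex · 0))
    (measure_mono_null simplex_diff_iUnion_marginCell_zero_subset hausdorffMeasure_separatingSet)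

lemma homothety_single_apply [DecidableEq ι] (i : ι) (r : ℝ) (x : EuclideanSpace ℝ ι)
    (l : ι) :
    AffineMap.homothety (single i 1) r x l =
      r * x l + (1 - r) * (if l = i then 1 else 0) := by
  simp [AffineMap.homothety_eq_lineMap, AffineMap.lineMap_apply_module]
  ring

lemma coordSum_homothety_single [DecidableEq ι] (i : ι) (r : ℝ) (x : EuclideanSpace ℝ ι) :
    coordSum ι (AffineMap.homothety (single i 1) r x) = r * coordSum ι x + (1 - r) := by
  simp [AffineMap.homothety_eq_lineMap, AffineMap.lineMap_apply_module]
  ring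

lemma marginCell_eq_homothety_image [DecidableEq ι] [Nontrivial ι] (i : ι) {t : ℝ}
    (ht0 : 0 ≤ t) (ht1 : t < 1) :
    marginCell i t = AffineMap.homothety (single i 1) (1 - t) '' marginCell i 0 := by
  have ht : 0 < 1 - t := by linarith
  apply Subset.antisymm
  · rintro y ⟨hy, hyi⟩
    rw [mem_simplex] at hy
    have hyit : t ≤ y i := by
      obtain ⟨l, hli⟩ := exists_ne i
      linarith [hyi l hli, hy.1 l]
    refine ⟨AffineMap.homothety (single i 1) (1 - t)⁻¹ y,
      ⟨mem_simplex.2 ⟨fun l => ?_, ?_⟩, fun l hli => ?_⟩, ?_⟩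
    · rw [homothety_single_apply]
      split_ifs with hli
      · subst hli
        field_simp
        linarith
      · rw [mul_zero, add_zero]
        exact mul_nonneg (inv_nonneg.2 ht.le) (hy.1 l)
    · rw [coordSum_homothety_single, hy.2]
      ring
    · rw [homothety_single_apply, homothety_single_apply, if_neg hli, if_pos rfl]
      field_simp
      linarith [hyi l hli]
    · rw [← AffineMap.homothety_mul_apply, mul_inv_cancel₀ ht.ne', AffineMap.homothety_one]
      rfl
  · rintro _ ⟨x, ⟨hx, hxi⟩, rfl⟩
    rw [mem_simplex] at hx
    refine ⟨mem_simplex.2 ⟨fun l => ?_, ?_⟩, fun l hli => ?_⟩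
    · rw [homothety_single_apply]
      have := hx.1 l
      split_ifs <;> nlinarith
    · rw [coordSum_homothety_single, hx.2]
      ring
    · rw [homothety_single_apply, homothety_single_apply, if_neg hli, if_pos rfl]
      nlinarith [hxi l hli]

lemma hausdorffMeasure_marginCell [Nontrivial ι] (i : ι) {t : ℝ} (ht0 : 0 ≤ t) (ht1 : t < 1) :
    μH[(Fintype.card ι : ℝ) - 1] (marginCell i t) =
      ENNReal.ofReal ((1 - t) ^ (Fintype.card ι - 1)) *
        μH[(Fintype.card ι : ℝ) - 1] (marginCell i 0) := by
  classical
  rw [marginCell_eq_homothety_image i ht0 ht1,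
    hausdorffMeasure_homothety_image card_sub_one_nonneg _ (by linarith : 1 - t ≠ 0),
    card_sub_one_cast, NNReal.rpow_natCast, ENNReal.smul_def, smul_eq_mul, ENNReal.coe_pow,
    ENNReal.ofReal_pow (by linarith), ← enorm_eq_nnnorm, Real.enorm_of_nonneg (by linarith)]

theorem hausdorffMeasure_simplex_diff_iUnion_marginCell [Nontrivial ι] {t : ℝ} (ht0 : 0 ≤ t)
    (ht1 : t < 1) :
    μH[(Fintype.card ι : ℝ) - 1] (simplex ι \ ⋃ i : ι, marginCell i t) =
      ENNReal.ofReal (1 - (1 - t) ^ (Fintype.card ι - 1)) *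
        μH[(Fintype.card ι : ℝ) - 1] (simplex ι) := by
  have hU : μH[(Fintype.card ι : ℝ) - 1] (⋃ i : ι, marginCell i t) =
      ENNReal.ofReal ((1 - t) ^ (Fintype.card ι - 1)) *
        μH[(Fintype.card ι : ℝ) - 1] (simplex ι) := by
    rw [hausdorffMeasure_iUnion_marginCell _ ht0]
    simp_rw [hausdorffMeasure_marginCell _ ht0 ht1]
    rw [← Finset.mul_sum, sum_hausdorffMeasure_marginCell_zero]
  have hfin := hausdorffMeasure_simplex_lt_top (ι := ι)
  rw [measure_sdiff (iUnion_subset (marginCell_subset_simplex · t))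
    (MeasurableSet.iUnion (measurableSet_marginCell · t)).nullMeasurableSet
    (hU ▸ ENNReal.mul_ne_top ENNReal.ofReal_ne_top hfin.ne), hU,
    ENNReal.ofReal_sub _ (pow_nonneg (by linarith) _), ENNReal.ofReal_one,
    ENNReal.sub_mul fun _ _ => hfin.ne, one_mul]

end Voronoi

/-- For the Voronoi partition `A*_i = {x ∈ Δ_k : x_i = max_j x_j}` of
`Δ_k` (`k ≥ 2`) with separating set `S* = {x ∈ Δ_k : ∃ i ≠ j, x_i = x_j = max_ℓ x_ℓ}`,
for every `0 < ε ≤ 1/(2k)`: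
(1) `S*_ε = Δ_k \ ⋃_i {x ∈ Δ_k : x_i > ε√2 + max_{ℓ≠i} x_ℓ}`;
(2) `μH^{k-1}(S*_ε) = (1 − (1 − ε√2)^{k-1})·μH^{k-1}(Δ_k)`. -/
theorem voronoi_separating_set_neighborhood (k : ℕ) (hk : 2 ≤ k)
    (Δ : Set (EuclideanSpace ℝ (Fin k)))
    (hΔ : Δ = {x : EuclideanSpace ℝ (Fin k) | (∀ i, 0 ≤ x i) ∧ ∑ i, x i = 1})
    (Sstar : Set (EuclideanSpace ℝ (Fin k)))
    (hSstar : Sstar = {x ∈ Δ | ∃ i j : Fin k, i ≠ j ∧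
      (∀ l, x l ≤ x i) ∧ x i = x j})
    (ε : ℝ) (hε : 0 < ε) (hεk : ε ≤ 1 / (2 * k)) :
    ({x ∈ Δ | Metric.infDist x Sstar ≤ ε} =
      Δ \ ⋃ i : Fin k, {x ∈ Δ | ∀ l : Fin k, l ≠ i → ε * Real.sqrt 2 + x l < x i}) ∧
    μH[(k : ℝ) - 1] {x ∈ Δ | Metric.infDist x Sstar ≤ ε} =
      ENNReal.ofReal (1 - (1 - ε * Real.sqrt 2) ^ (k - 1)) * μH[(k : ℝ) - 1] Δ := by
  obtain rfl : Δ = Voronoi.simplex (Fin k) := hΔ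
  obtain rfl : Sstar = Voronoi.separatingSet (Fin k) := hSstar
  have : Nontrivial (Fin k) := Fin.nontrivial_iff_two_le.2 hk
  have hsqrt : √2 < 2 := by rw [Real.sqrt_lt' two_pos]; norm_num
  have hεk' : ε * (2 * k) ≤ 1 := (le_div_iff₀ (by positivity)).1 hεk
  have hk' : (2 : ℝ) ≤ k := by exact_mod_cast hk
  rw [Voronoi.setOf_infDist_separatingSet_le]
  refine ⟨rfl, ?_⟩
  simpa only [Fintype.card_fin] using
    Voronoi.hausdorffMeasure_simplex_diff_iUnion_marginCell (ι := Fin k) (by positivity)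
      (by nlinarith)
end

section
/- For every δ > 0 there exists a Sperner-admissible partition (B_1, B_2, B_3, B_4) of the unit square Q = [0,1]² whose separating set ∪_{i≠j}(B_i ∩ B_j) has 1-dimensional Hausdorff measure at most √2 + δ. In particular, the Voronoi partition of Q (whose separating set has length 2) does not minimize the length of the separating set among Sperner-admissible partitions of the square. -/
open MeasureTheory

noncomputable def sqPt (a b : ℝ) : EuclideanSpace ℝ (Fin 2) := WithLp.toLp 2 ![a, b]

@[simp] lemma sqPt_apply0 (a b : ℝ) : sqPt a b 0 = a := rfl
@[simp] lemma sqPt_apply1 (a b : ℝ) : sqPt a b 1 = b := rfl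

lemma sq_frontier_aux {S : Set (EuclideanSpace ℝ (Fin 2))} (hS : IsClosed S)
    {x : EuclideanSpace ℝ (Fin 2)} (hx : x ∈ S) (v : EuclideanSpace ℝ (Fin 2))
    (h : ∀ t : ℝ, 0 < t → x + t • v ∉ S) : x ∈ frontier S := by
  rw [hS.frontier_eq]
  refine ⟨hx, fun hint => ?_⟩
  have hc : Filter.Tendsto (fun t : ℝ => x + t • v) (nhds 0) (nhds x) := by
    have hcont : Continuous fun t : ℝ => x + t • v := by continuity
    simpa using hcont.tendsto 0
  have hev : ∀ᶠ t in nhds (0 : ℝ), x + t • v ∈ S :=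
    hc (mem_interior_iff_mem_nhds.mp hint)
  have hev' : ∀ᶠ t in nhdsWithin (0 : ℝ) (Set.Ioi 0),
      (x + t • v ∈ S) ∧ t ∈ Set.Ioi (0 : ℝ) :=
    (hev.filter_mono nhdsWithin_le_nhds).and self_mem_nhdsWithin
  obtain ⟨t, htS, ht⟩ := hev'.exists
  exact h t ht htS

lemma sq_mem_segment {p q x : EuclideanSpace ℝ (Fin 2)} {t : ℝ} (ht0 : 0 ≤ t) (ht1 : t ≤ 1)
    (h0 : x 0 = (1 - t) * p 0 + t * q 0) (h1 : x 1 = (1 - t) * p 1 + t * q 1) :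
    x ∈ segment ℝ p q := by
  rw [segment_eq_image]
  refine ⟨t, ⟨ht0, ht1⟩, ?_⟩
  ext i
  fin_cases i
  · exact h0.symm
  · exact h1.symm

lemma sq_dist_sqPt (a b c d : ℝ) :
    dist (sqPt a b) (sqPt c d) = Real.sqrt ((a - c) ^ 2 + (b - d) ^ 2) := by
  rw [EuclideanSpace.dist_eq, Fin.sum_univ_two]
  simp [Real.dist_eq, sq_abs]

lemma sq_measure_segment (a b c d : ℝ) :
    μH[(1 : ℝ)] (segment ℝ (sqPt a b) (sqPt c d)) =
      ENNReal.ofReal (Real.sqrt ((a - c) ^ 2 + (b - d) ^ 2)) := by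
  rw [hausdorffMeasure_segment, edist_dist, sq_dist_sqPt]

/-- For every `δ > 0` there is a Sperner-admissible partition
`(B_1, B_2, B_3, B_4)` of the unit square `Q = [0,1]²` (closed sets covering `Q`,
disjoint except on their boundaries, such that each point on a face of `Q` lies only
in the `B_i` whose vertex `v_i` belongs to that face, where `v_1 = (0,0)`,
`v_2 = (1,0)`, `v_3 = (1,1)`, `v_4 = (0,1)`) whose separating set has 1-dimensional
Hausdorff measure at most `√2 + δ`. -/
theorem square_partition_short_separating_set (δ : ℝ) (hδ : 0 < δ)
    (Q : Set (EuclideanSpace ℝ (Fin 2)))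
    (hQ : Q = {x : EuclideanSpace ℝ (Fin 2) |
      x 0 ∈ Set.Icc (0 : ℝ) 1 ∧ x 1 ∈ Set.Icc (0 : ℝ) 1}) :
    ∃ B : Fin 4 → Set (EuclideanSpace ℝ (Fin 2)),
      (∀ i, IsClosed (B i)) ∧
      (⋃ i, B i) = Q ∧
      (∀ i j, i ≠ j → B i ∩ B j ⊆ frontier (B i) ∩ frontier (B j)) ∧
      (∀ i : Fin 4, ∀ x ∈ B i,
        (x 1 = 0 → i = 0 ∨ i = 1) ∧
        (x 0 = 1 → i = 1 ∨ i = 2) ∧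
        (x 1 = 1 → i = 2 ∨ i = 3) ∧
        (x 0 = 0 → i = 3 ∨ i = 0)) ∧
      μH[(1 : ℝ)] (⋃ (i) (j) (_ : i ≠ j), B i ∩ B j) ≤
        ENNReal.ofReal (Real.sqrt 2 + δ) := by
  subst hQ
  set ε : ℝ := min (δ / 4) (1 / 4) with hε_def
  have hε0 : 0 < ε := lt_min (by linarith) (by norm_num)
  have hε4 : ε ≤ 1 / 4 := min_le_right _ _
  have hεδ : 4 * ε ≤ δ := by
    have h : ε ≤ δ / 4 := min_le_left _ _
    linarith
  set S0 : Set (EuclideanSpace ℝ (Fin 2)) :=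
    {x | 0 ≤ x 0 ∧ 0 ≤ x 1 ∧ x 0 ≤ 1 - ε ∧ x 1 ≤ 1 - ε ∧ x 0 + x 1 ≤ 1} with hS0d
  set S1 : Set (EuclideanSpace ℝ (Fin 2)) :=
    {x | 1 - ε ≤ x 0 ∧ x 0 ≤ 1 ∧ 0 ≤ x 1 ∧ x 1 ≤ ε} with hS1d
  set S2 : Set (EuclideanSpace ℝ (Fin 2)) :=
    {x | ε ≤ x 0 ∧ x 0 ≤ 1 ∧ ε ≤ x 1 ∧ x 1 ≤ 1 ∧ 1 ≤ x 0 + x 1} with hS2d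
  set S3 : Set (EuclideanSpace ℝ (Fin 2)) :=
    {x | 0 ≤ x 0 ∧ x 0 ≤ ε ∧ 1 - ε ≤ x 1 ∧ x 1 ≤ 1} with hS3d
  have hc : ∀ i : Fin 2, Continuous fun x : EuclideanSpace ℝ (Fin 2) => x i :=
    fun i => (EuclideanSpace.proj i).continuous
  have h0closed : IsClosed S0 := by
    have he : S0 = {x : EuclideanSpace ℝ (Fin 2) | 0 ≤ x 0} ∩
        ({x | 0 ≤ x 1} ∩ ({x | x 0 ≤ 1 - ε} ∩ ({x | x 1 ≤ 1 - ε} ∩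
          {x | x 0 + x 1 ≤ 1}))) := rfl
    rw [he]
    exact (isClosed_le continuous_const (hc 0)).inter
      ((isClosed_le continuous_const (hc 1)).inter
        ((isClosed_le (hc 0) continuous_const).inter
          ((isClosed_le (hc 1) continuous_const).inter
            (isClosed_le ((hc 0).add (hc 1)) continuous_const))))
  have h1closed : IsClosed S1 := by
    have he : S1 = {x : EuclideanSpace ℝ (Fin 2) | 1 - ε ≤ x 0} ∩
        ({x | x 0 ≤ 1} ∩ ({x | 0 ≤ x 1} ∩ {x | x 1 ≤ ε})) := rfl
    rw [he]
    exact (isClosed_le continuous_const (hc 0)).inter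
      ((isClosed_le (hc 0) continuous_const).inter
        ((isClosed_le continuous_const (hc 1)).inter
          (isClosed_le (hc 1) continuous_const)))
  have h2closed : IsClosed S2 := by
    have he : S2 = {x : EuclideanSpace ℝ (Fin 2) | ε ≤ x 0} ∩
        ({x | x 0 ≤ 1} ∩ ({x | ε ≤ x 1} ∩ ({x | x 1 ≤ 1} ∩
          {x | 1 ≤ x 0 + x 1}))) := rfl
    rw [he]
    exact (isClosed_le continuous_const (hc 0)).inter
      ((isClosed_le (hc 0) continuous_const).inter
        ((isClosed_le continuous_const (hc 1)).inter
          ((isClosed_le (hc 1) continuous_const).inter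
            (isClosed_le continuous_const ((hc 0).add (hc 1))))))
  have h3closed : IsClosed S3 := by
    have he : S3 = {x : EuclideanSpace ℝ (Fin 2) | 0 ≤ x 0} ∩
        ({x | x 0 ≤ ε} ∩ ({x | 1 - ε ≤ x 1} ∩ {x | x 1 ≤ 1})) := rfl
    rw [he]
    exact (isClosed_le continuous_const (hc 0)).inter
      ((isClosed_le (hc 0) continuous_const).inter
        ((isClosed_le continuous_const (hc 1)).inter
          (isClosed_le (hc 1) continuous_const)))
  -- the frontier claim
  have claim : ∀ i j : Fin 4, i ≠ j → ∀ x,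
      x ∈ (![S0, S1, S2, S3] : Fin 4 → Set _) i ∩ (![S0, S1, S2, S3] : Fin 4 → Set _) j →
      x ∈ frontier ((![S0, S1, S2, S3] : Fin 4 → Set _) i) := by
    intro i j hij x hx
    obtain ⟨hxi, hxj⟩ := hx
    fin_cases i <;> fin_cases j
    · exact absurd rfl hij
    · -- (0,1)
      refine sq_frontier_aux h0closed hxi (sqPt 1 0) fun t ht hmem => ?_
      obtain ⟨-, -, hle, -, -⟩ := hmem
      have he : (x + t • sqPt 1 0) 0 = x 0 + t * 1 := rfl
      rw [he] at hle
      have := hxj.1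
      linarith
    · -- (0,2)
      refine sq_frontier_aux h0closed hxi (sqPt 1 0) fun t ht hmem => ?_
      obtain ⟨-, -, -, -, hle⟩ := hmem
      have he : (x + t • sqPt 1 0) 0 + (x + t • sqPt 1 0) 1 = (x 0 + t * 1) + (x 1 + t * 0) := rfl
      rw [he] at hle
      have := hxj.2.2.2.2
      linarith
    · -- (0,3)
      refine sq_frontier_aux h0closed hxi (sqPt 0 1) fun t ht hmem => ?_
      obtain ⟨-, -, -, hle, -⟩ := hmem
      have he : (x + t • sqPt 0 1) 1 = x 1 + t * 1 := rfl
      rw [he] at hle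
      have := hxj.2.2.1
      linarith
    · -- (1,0)
      refine sq_frontier_aux h1closed hxi (sqPt (-1) 0) fun t ht hmem => ?_
      obtain ⟨hle, -, -, -⟩ := hmem
      have he : (x + t • sqPt (-1) 0) 0 = x 0 + t * (-1) := rfl
      rw [he] at hle
      have := hxj.2.2.1
      linarith
    · exact absurd rfl hij
    · -- (1,2)
      refine sq_frontier_aux h1closed hxi (sqPt 0 1) fun t ht hmem => ?_
      obtain ⟨-, -, -, hle⟩ := hmem
      have he : (x + t • sqPt 0 1) 1 = x 1 + t * 1 := rfl
      rw [he] at hle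
      have := hxj.2.2.1
      linarith
    · -- (1,3) : impossible
      exfalso
      have h1 := hxi.1
      have h2 := hxj.2.1
      linarith
    · -- (2,0)
      refine sq_frontier_aux h2closed hxi (sqPt (-1) 0) fun t ht hmem => ?_
      obtain ⟨-, -, -, -, hle⟩ := hmem
      have he : (x + t • sqPt (-1) 0) 0 + (x + t • sqPt (-1) 0) 1
          = (x 0 + t * (-1)) + (x 1 + t * 0) := rfl
      rw [he] at hle
      have := hxj.2.2.2.2
      linarith
    · -- (2,1)
      refine sq_frontier_aux h2closed hxi (sqPt 0 (-1)) fun t ht hmem => ?_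
      obtain ⟨-, -, hle, -, -⟩ := hmem
      have he : (x + t • sqPt 0 (-1)) 1 = x 1 + t * (-1) := rfl
      rw [he] at hle
      have := hxj.2.2.2
      linarith
    · exact absurd rfl hij
    · -- (2,3)
      refine sq_frontier_aux h2closed hxi (sqPt (-1) 0) fun t ht hmem => ?_
      obtain ⟨hle, -, -, -, -⟩ := hmem
      have he : (x + t • sqPt (-1) 0) 0 = x 0 + t * (-1) := rfl
      rw [he] at hle
      have := hxj.2.1
      linarith
    · -- (3,0)
      refine sq_frontier_aux h3closed hxi (sqPt 0 (-1)) fun t ht hmem => ?_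
      obtain ⟨-, -, hle, -⟩ := hmem
      have he : (x + t • sqPt 0 (-1)) 1 = x 1 + t * (-1) := rfl
      rw [he] at hle
      have := hxj.2.2.2.1
      linarith
    · -- (3,1) : impossible
      exfalso
      have h1 := hxi.2.1
      have h2 := hxj.1
      linarith
    · -- (3,2)
      refine sq_frontier_aux h3closed hxi (sqPt 1 0) fun t ht hmem => ?_
      obtain ⟨-, hle, -, -⟩ := hmem
      have he : (x + t • sqPt 1 0) 0 = x 0 + t * 1 := rfl
      rw [he] at hle
      have := hxj.1
      linarith
    · exact absurd rfl hij
  refine ⟨![S0, S1, S2, S3], ?_, ?_, ?_, ?_, ?_⟩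
  · intro i
    fin_cases i
    · exact h0closed
    · exact h1closed
    · exact h2closed
    · exact h3closed
  · ext x
    simp only [Set.mem_iUnion, Set.mem_setOf_eq, Set.mem_Icc]
    constructor
    · rintro ⟨i, hi⟩
      fin_cases i
      · obtain ⟨h1, h2, h3, h4, h5⟩ := hi
        exact ⟨⟨h1, by linarith⟩, ⟨h2, by linarith⟩⟩
      · obtain ⟨h1, h2, h3, h4⟩ := hi
        exact ⟨⟨by linarith, h2⟩, ⟨h3, by linarith⟩⟩
      · obtain ⟨h1, h2, h3, h4, h5⟩ := hi
        exact ⟨⟨by linarith, h2⟩, ⟨by linarith, h4⟩⟩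
      · obtain ⟨h1, h2, h3, h4⟩ := hi
        exact ⟨⟨h1, by linarith⟩, ⟨by linarith, h4⟩⟩
    · rintro ⟨⟨h00, h01⟩, h10, h11⟩
      rcases le_total (x 0 + x 1) 1 with hd | hd
      · rcases le_total (x 0) (1 - ε) with ha | ha
        · rcases le_total (x 1) (1 - ε) with hb | hb
          · exact ⟨0, h00, h10, ha, hb, hd⟩
          · exact ⟨3, h00, by linarith, hb, h11⟩
        · exact ⟨1, ha, h01, h10, by linarith⟩
      · rcases le_total ε (x 0) with ha | ha
        · rcases le_total ε (x 1) with hb | hb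
          · exact ⟨2, ha, h01, hb, h11, hd⟩
          · exact ⟨1, by linarith, h01, h10, hb⟩
        · exact ⟨3, h00, ha, by linarith, h11⟩
  · intro i j hij
    exact Set.subset_inter (fun x hx => claim i j hij x hx)
      (fun x hx => claim j i hij.symm x ⟨hx.2, hx.1⟩)
  · intro i x hx
    fin_cases i
    · obtain ⟨h1, h2, h3, h4, h5⟩ := hx
      refine ⟨fun _ => Or.inl rfl, fun h => ?_, fun h => ?_, fun _ => Or.inr rfl⟩
      · exfalso; linarith
      · exfalso; linarith
    · obtain ⟨h1, h2, h3, h4⟩ := hx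
      refine ⟨fun _ => Or.inr rfl, fun _ => Or.inl rfl, fun h => ?_, fun h => ?_⟩
      · exfalso; linarith
      · exfalso; linarith
    · obtain ⟨h1, h2, h3, h4, h5⟩ := hx
      refine ⟨fun h => ?_, fun _ => Or.inr rfl, fun _ => Or.inl rfl, fun h => ?_⟩
      · exfalso; linarith
      · exfalso; linarith
    · obtain ⟨h1, h2, h3, h4⟩ := hx
      refine ⟨fun h => ?_, fun h => ?_, fun _ => Or.inr rfl, fun _ => Or.inl rfl⟩
      · exfalso; linarith
      · exfalso; linarith
  · -- measure bound
    have mem01 : ∀ x, x ∈ S0 → x ∈ S1 →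
        x ∈ segment ℝ (sqPt (1 - ε) 0) (sqPt (1 - ε) ε) := by
      intro x hx0 hx1
      have hx0eq : x 0 = 1 - ε := le_antisymm hx0.2.2.1 hx1.1
      refine sq_mem_segment (t := x 1 / ε) (div_nonneg hx1.2.2.1 hε0.le)
        ((div_le_one hε0).mpr hx1.2.2.2) ?_ ?_
      · simp only [sqPt_apply0]; rw [hx0eq]; ring
      · simp only [sqPt_apply1]; field_simp; ring
    have mem12 : ∀ x, x ∈ S1 → x ∈ S2 →
        x ∈ segment ℝ (sqPt (1 - ε) ε) (sqPt 1 ε) := by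
      intro x hx1 hx2
      have hx1eq : x 1 = ε := le_antisymm hx1.2.2.2 hx2.2.2.1
      refine sq_mem_segment (t := (x 0 - (1 - ε)) / ε)
        (div_nonneg (by linarith [hx1.1]) hε0.le)
        ((div_le_one hε0).mpr (by linarith [hx1.2.1])) ?_ ?_
      · simp only [sqPt_apply0]; field_simp; ring
      · simp only [sqPt_apply1]; rw [hx1eq]; ring
    have mem03 : ∀ x, x ∈ S0 → x ∈ S3 →
        x ∈ segment ℝ (sqPt 0 (1 - ε)) (sqPt ε (1 - ε)) := by
      intro x hx0 hx3
      have hx1eq : x 1 = 1 - ε := le_antisymm hx0.2.2.2.1 hx3.2.2.1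
      refine sq_mem_segment (t := x 0 / ε) (div_nonneg hx0.1 hε0.le)
        ((div_le_one hε0).mpr hx3.2.1) ?_ ?_
      · simp only [sqPt_apply0]; field_simp; ring
      · simp only [sqPt_apply1]; rw [hx1eq]; ring
    have mem23 : ∀ x, x ∈ S2 → x ∈ S3 →
        x ∈ segment ℝ (sqPt ε (1 - ε)) (sqPt ε 1) := by
      intro x hx2 hx3
      have hx0eq : x 0 = ε := le_antisymm hx3.2.1 hx2.1
      refine sq_mem_segment (t := (x 1 - (1 - ε)) / ε)
        (div_nonneg (by linarith [hx3.2.2.1]) hε0.le)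
        ((div_le_one hε0).mpr (by linarith [hx3.2.2.2])) ?_ ?_
      · simp only [sqPt_apply0]; rw [hx0eq]; ring
      · simp only [sqPt_apply1]; field_simp; ring
    have mem02 : ∀ x, x ∈ S0 → x ∈ S2 →
        x ∈ segment ℝ (sqPt ε (1 - ε)) (sqPt (1 - ε) ε) := by
      intro x hx0 hx2
      have hd0 : (0 : ℝ) < 1 - 2 * ε := by linarith
      have hsum : x 0 + x 1 = 1 := le_antisymm hx0.2.2.2.2 hx2.2.2.2.2
      refine sq_mem_segment (t := (x 0 - ε) / (1 - 2 * ε))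
        (div_nonneg (by linarith [hx2.1]) hd0.le)
        ((div_le_one hd0).mpr (by linarith [hx0.2.2.1])) ?_ ?_
      · simp only [sqPt_apply0]; linear_combination (-(x 0 - ε)) * mul_inv_cancel₀ hd0.ne'
      · simp only [sqPt_apply1]
        have hx1v : x 1 = 1 - x 0 := by linarith
        rw [hx1v]; linear_combination (x 0 - ε) * mul_inv_cancel₀ hd0.ne'
    have hsub : (⋃ (i) (j) (_ : i ≠ j),
        (![S0, S1, S2, S3] : Fin 4 → Set _) i ∩ (![S0, S1, S2, S3] : Fin 4 → Set _) j) ⊆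
        segment ℝ (sqPt (1 - ε) 0) (sqPt (1 - ε) ε) ∪
          (segment ℝ (sqPt (1 - ε) ε) (sqPt 1 ε) ∪
            (segment ℝ (sqPt 0 (1 - ε)) (sqPt ε (1 - ε)) ∪
              (segment ℝ (sqPt ε (1 - ε)) (sqPt ε 1) ∪
                segment ℝ (sqPt ε (1 - ε)) (sqPt (1 - ε) ε)))) := by
      refine Set.iUnion_subset fun i => Set.iUnion_subset fun j => Set.iUnion_subset fun hij => ?_
      fin_cases i <;> fin_cases j
      · exact absurd rfl hij
      · exact fun x hx => Or.inl (mem01 x hx.1 hx.2)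
      · exact fun x hx => Or.inr (Or.inr (Or.inr (Or.inr (mem02 x hx.1 hx.2))))
      · exact fun x hx => Or.inr (Or.inr (Or.inl (mem03 x hx.1 hx.2)))
      · exact fun x hx => Or.inl (mem01 x hx.2 hx.1)
      · exact absurd rfl hij
      · exact fun x hx => Or.inr (Or.inl (mem12 x hx.1 hx.2))
      · exact fun x hx => absurd (And.intro hx.1.1 hx.2.2.1) (by intro ⟨ha, hb⟩; linarith)
      · exact fun x hx => Or.inr (Or.inr (Or.inr (Or.inr (mem02 x hx.2 hx.1))))
      · exact fun x hx => Or.inr (Or.inl (mem12 x hx.2 hx.1))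
      · exact absurd rfl hij
      · exact fun x hx => Or.inr (Or.inr (Or.inr (Or.inl (mem23 x hx.1 hx.2))))
      · exact fun x hx => Or.inr (Or.inr (Or.inl (mem03 x hx.2 hx.1)))
      · exact fun x hx => absurd (And.intro hx.2.1 hx.1.2.1) (by intro ⟨ha, hb⟩; linarith)
      · exact fun x hx => Or.inr (Or.inr (Or.inr (Or.inl (mem23 x hx.2 hx.1))))
      · exact absurd rfl hij
    have hseg1 : μH[(1 : ℝ)] (segment ℝ (sqPt (1 - ε) 0) (sqPt (1 - ε) ε)) ≤
        ENNReal.ofReal ε := by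
      rw [sq_measure_segment]
      refine ENNReal.ofReal_le_ofReal (le_of_eq ?_)
      have h : ((1 - ε) - (1 - ε)) ^ 2 + ((0 : ℝ) - ε) ^ 2 = ε ^ 2 := by ring
      rw [h, Real.sqrt_sq hε0.le]
    have hseg2 : μH[(1 : ℝ)] (segment ℝ (sqPt (1 - ε) ε) (sqPt 1 ε)) ≤
        ENNReal.ofReal ε := by
      rw [sq_measure_segment]
      refine ENNReal.ofReal_le_ofReal (le_of_eq ?_)
      have h : ((1 - ε) - 1) ^ 2 + (ε - ε) ^ 2 = ε ^ 2 := by ring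
      rw [h, Real.sqrt_sq hε0.le]
    have hseg3 : μH[(1 : ℝ)] (segment ℝ (sqPt 0 (1 - ε)) (sqPt ε (1 - ε))) ≤
        ENNReal.ofReal ε := by
      rw [sq_measure_segment]
      refine ENNReal.ofReal_le_ofReal (le_of_eq ?_)
      have h : ((0 : ℝ) - ε) ^ 2 + ((1 - ε) - (1 - ε)) ^ 2 = ε ^ 2 := by ring
      rw [h, Real.sqrt_sq hε0.le]
    have hseg4 : μH[(1 : ℝ)] (segment ℝ (sqPt ε (1 - ε)) (sqPt ε 1)) ≤
        ENNReal.ofReal ε := by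
      rw [sq_measure_segment]
      refine ENNReal.ofReal_le_ofReal (le_of_eq ?_)
      have h : (ε - ε) ^ 2 + ((1 - ε) - 1) ^ 2 = ε ^ 2 := by ring
      rw [h, Real.sqrt_sq hε0.le]
    have hsegD : μH[(1 : ℝ)] (segment ℝ (sqPt ε (1 - ε)) (sqPt (1 - ε) ε)) ≤
        ENNReal.ofReal (Real.sqrt 2) := by
      rw [sq_measure_segment]
      refine ENNReal.ofReal_le_ofReal (Real.sqrt_le_sqrt ?_)
      nlinarith [hε0.le, hε4]
    calc μH[(1 : ℝ)] (⋃ (i) (j) (_ : i ≠ j),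
          (![S0, S1, S2, S3] : Fin 4 → Set _) i ∩ (![S0, S1, S2, S3] : Fin 4 → Set _) j)
        ≤ μH[(1 : ℝ)] (segment ℝ (sqPt (1 - ε) 0) (sqPt (1 - ε) ε) ∪
            (segment ℝ (sqPt (1 - ε) ε) (sqPt 1 ε) ∪
              (segment ℝ (sqPt 0 (1 - ε)) (sqPt ε (1 - ε)) ∪
                (segment ℝ (sqPt ε (1 - ε)) (sqPt ε 1) ∪
                  segment ℝ (sqPt ε (1 - ε)) (sqPt (1 - ε) ε))))) := measure_mono hsub
      _ ≤ μH[(1 : ℝ)] (segment ℝ (sqPt (1 - ε) 0) (sqPt (1 - ε) ε)) +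
            (μH[(1 : ℝ)] (segment ℝ (sqPt (1 - ε) ε) (sqPt 1 ε)) +
              (μH[(1 : ℝ)] (segment ℝ (sqPt 0 (1 - ε)) (sqPt ε (1 - ε))) +
                (μH[(1 : ℝ)] (segment ℝ (sqPt ε (1 - ε)) (sqPt ε 1)) +
                  μH[(1 : ℝ)] (segment ℝ (sqPt ε (1 - ε)) (sqPt (1 - ε) ε))))) := by
          refine le_trans (measure_union_le _ _) (add_le_add le_rfl ?_)
          refine le_trans (measure_union_le _ _) (add_le_add le_rfl ?_)
          refine le_trans (measure_union_le _ _) (add_le_add le_rfl ?_)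
          exact measure_union_le _ _
      _ ≤ ENNReal.ofReal ε + (ENNReal.ofReal ε + (ENNReal.ofReal ε +
            (ENNReal.ofReal ε + ENNReal.ofReal (Real.sqrt 2)))) :=
          add_le_add hseg1 (add_le_add hseg2 (add_le_add hseg3 (add_le_add hseg4 hsegD)))
      _ = ENNReal.ofReal (ε + (ε + (ε + (ε + Real.sqrt 2)))) := by
          rw [← ENNReal.ofReal_add hε0.le (Real.sqrt_nonneg 2),
            ← ENNReal.ofReal_add hε0.le (by positivity),
            ← ENNReal.ofReal_add hε0.le (by positivity),
            ← ENNReal.ofReal_add hε0.le (by positivity)]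
      _ ≤ ENNReal.ofReal (Real.sqrt 2 + δ) := ENNReal.ofReal_le_ofReal (by linarith)
end
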